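/- arXiv:2406.16399 — 4 statements merged into one kernel-verified Lean document; each statement's English description precedes it below -/
import Mathlib

section
/- For every n ≥ 1, the number of permutations of size n avoiding both patterns 231 and 4213 equals the odd-indexed Fibonacci number F(2n-1), where F(1) = F(2) = 1. -/
/-- `π` is a permutation of `{1,…,n}`, encoded as the list of its values. -/
def IsPermList (n : ℕ) (π : List ℕ) : Prop := π.Perm (List.range' 1 n)

/-- The pattern `σ` occurs in `π`: some subsequence of `π` is order-isomorphic to `σ`. -/
def Contains (π σ : List ℕ) : Prop :=
  ∃ τ : List ℕ, τ.Sublist π ∧ τ.length = σ.length ∧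
    ∀ i j : ℕ, i < τ.length → j < τ.length → (τ[i]! < τ[j]! ↔ σ[i]! < σ[j]!)

/-- `π` avoids the pattern `σ`. -/
def Avoids (π σ : List ℕ) : Prop := ¬ Contains π σ

/-- The pop stack with bypass sorting procedure (algorithm PSB); the second
argument is the pop stack, stored top-first.  Push if the stack is empty or the
current element is `TOP - 1`; bypass if it is `< TOP - 1`; otherwise pop the
whole stack and push.  At the end the stack is popped. -/
def psbAux : List ℕ → List ℕ → List ℕ
  | [], s => s
  | x :: xs, [] => psbAux xs [x]
  | x :: xs, t :: s =>
      if x + 1 = t then psbAux xs (x :: t :: s)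
      else if x + 1 < t then x :: psbAux xs (t :: s)
      else (t :: s) ++ psbAux xs [x]

/-- The map associated with the PSB algorithm. -/
def psb (π : List ℕ) : List ℕ := psbAux π []

namespace PSBProof
open List (Sublist)
open List

open List in
lemma flatMap_def' {α β : Type*} (l : List α) (f : α → List β) :
    l.flatMap f = (l.map f).flatten := rfl

/-- enumerator of `Av(213,231)` permutations of `range' a n`. -/
def mm : ℕ → ℕ → List (List ℕ)
  | _, 0 => [[]]
  | a, 1 => [[a]]
  | a, n+2 => ((mm (a+1) (n+1)).map (a :: ·)) ++ ((mm a (n+1)).map ((a+n+1) :: ·))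

/-- enumerator of `Av(231,4213)` permutations of `range' a n`. -/
def av (a : ℕ) : ℕ → List (List ℕ)
  | 0 => [[]]
  | n+1 => (List.range (n+1)).attach.flatMap (fun k =>
      (av a k.1).flatMap (fun u => (mm (a + k.1) (n - k.1)).map (fun v => u ++ (a+n) :: v)))
  decreasing_by exact List.mem_range.mp k.2

lemma attach_flatMap {α β : Type*} (l : List α) (f : α → List β) :
    l.attach.flatMap (fun x => f x.1) = l.flatMap f := by
  rw [flatMap_def', flatMap_def', List.attach_map_val]

lemma av_succ (a n : ℕ) : av a (n+1) = (List.range (n+1)).flatMap (fun k =>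
    (av a k).flatMap (fun u => (mm (a + k) (n - k)).map (fun v => u ++ (a+n) :: v))) := by
  rw [av, ← attach_flatMap (List.range (n+1))
    (fun k => (av a k).flatMap (fun u => (mm (a + k) (n - k)).map (fun v => u ++ (a+n) :: v)))]

lemma mem_av_succ {a n : ℕ} {π : List ℕ} : π ∈ av a (n+1) ↔
    ∃ k ≤ n, ∃ u ∈ av a k, ∃ v ∈ mm (a+k) (n-k), π = u ++ (a+n) :: v := by
  simp [av_succ, List.mem_flatMap, Nat.lt_succ_iff, eq_comm]

lemma short_avoids {π σ : List ℕ} (h : π.length < σ.length) : Avoids π σ := by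
  rintro ⟨τ, hs, hl, -⟩
  have := hs.length_le
  omega

lemma avoids_sublist {π π' σ : List ℕ} (h : List.Sublist π' π) (ha : Avoids π σ) : Avoids π' σ := by
  rintro ⟨τ, hs, hl, hi⟩
  exact ha ⟨τ, hs.trans h, hl, hi⟩

lemma contains231 {π : List ℕ} {x y z : ℕ} (h : List.Sublist [x,y,z] π) (h1 : z < x) (h2 : x < y) :
    Contains π [2,3,1] := by
  refine ⟨[x,y,z], h, rfl, ?_⟩
  intro i j hi hj
  simp only [List.length_cons, List.length_nil] at hi hj
  interval_cases i <;> interval_cases j <;> simp <;> omega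

lemma contains213 {π : List ℕ} {x y z : ℕ} (h : List.Sublist [x,y,z] π) (h1 : y < x) (h2 : x < z) :
    Contains π [2,1,3] := by
  refine ⟨[x,y,z], h, rfl, ?_⟩
  intro i j hi hj
  simp only [List.length_cons, List.length_nil] at hi hj
  interval_cases i <;> interval_cases j <;> simp <;> omega

lemma contains4213 {π : List ℕ} {w x y z : ℕ} (h : List.Sublist [w,x,y,z] π)
    (h1 : y < x) (h2 : x < z) (h3 : z < w) : Contains π [4,2,1,3] := by
  refine ⟨[w,x,y,z], h, rfl, ?_⟩
  intro i j hi hj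
  simp only [List.length_cons, List.length_nil] at hi hj
  interval_cases i <;> interval_cases j <;> simp <;> omega

lemma contains231_elim {π : List ℕ} (h : Contains π [2,3,1]) :
    ∃ x y z, List.Sublist [x,y,z] π ∧ z < x ∧ x < y := by
  obtain ⟨τ, hs, hl, hi⟩ := h
  simp only [List.length_cons, List.length_nil] at hl
  obtain ⟨x, y, z, rfl⟩ := List.length_eq_three.mp hl
  refine ⟨x, y, z, hs, ?_, ?_⟩
  · simpa using (hi 2 0 (by simp) (by simp)).mpr (by norm_num)
  · simpa using (hi 0 1 (by simp) (by simp)).mpr (by norm_num)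

lemma contains213_elim {π : List ℕ} (h : Contains π [2,1,3]) :
    ∃ x y z, List.Sublist [x,y,z] π ∧ y < x ∧ x < z := by
  obtain ⟨τ, hs, hl, hi⟩ := h
  simp only [List.length_cons, List.length_nil] at hl
  obtain ⟨x, y, z, rfl⟩ := List.length_eq_three.mp hl
  refine ⟨x, y, z, hs, ?_, ?_⟩
  · simpa using (hi 1 0 (by simp) (by simp)).mpr (by norm_num)
  · simpa using (hi 0 2 (by simp) (by simp)).mpr (by norm_num)

lemma contains4213_elim {π : List ℕ} (h : Contains π [4,2,1,3]) :
    ∃ w x y z, List.Sublist [w,x,y,z] π ∧ y < x ∧ x < z ∧ z < w := by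
  obtain ⟨τ, hs, hl, hi⟩ := h
  simp only [List.length_cons, List.length_nil] at hl
  obtain ⟨w, τ, rfl, hl3⟩ : ∃ w τ', τ = w :: τ' ∧ τ'.length = 3 := by
    cases τ with
    | nil => simp at hl
    | cons w τ => exact ⟨w, τ, rfl, by simpa using hl⟩
  obtain ⟨x, y, z, rfl⟩ := List.length_eq_three.mp hl3
  refine ⟨w, x, y, z, hs, ?_, ?_, ?_⟩
  · simpa using (hi 2 1 (by simp) (by simp)).mpr (by norm_num)
  · simpa using (hi 1 3 (by simp) (by simp)).mpr (by norm_num)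
  · simpa using (hi 3 0 (by simp) (by simp)).mpr (by norm_num)

lemma mem_bounds {a n x : ℕ} {v : List ℕ} (h : v.Perm (List.range' a n)) (hx : x ∈ v) :
    a ≤ x ∧ x < a + n := by
  simpa using h.subset hx

lemma mm_perm {n a : ℕ} {v : List ℕ} (h : v ∈ mm a n) : v.Perm (List.range' a n) := by
  induction n using Nat.strong_induction_on generalizing a v with
  | _ n ih =>
  rcases n with _ | _ | m
  · simp [mm] at h; simp [h]
  · simp [mm] at h; simp [h, List.range']
  · simp only [mm, List.mem_append, List.mem_map] at h
    rcases h with ⟨w, hw, rfl⟩ | ⟨w, hw, rfl⟩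
    · have hc := ih (m+1) (by omega) hw
      rw [List.range'_succ]
      exact hc.cons a
    · have hc := ih (m+1) (by omega) hw
      have h2 : List.range' a (m+2) = List.range' a (m+1) ++ [a+(m+1)] := by
        rw [show m+2 = m+1+1 from rfl]; simpa using List.range'_concat (step := 1) (s := a) (n := m+1)
      rw [h2]
      have : a + m + 1 = a + (m+1) := by omega
      rw [this] at *
      exact (hc.cons _).trans (List.perm_append_singleton _ _).symm

lemma mm_avoids {n a : ℕ} {v : List ℕ} (h : v ∈ mm a n) :
    Avoids v [2,1,3] ∧ Avoids v [2,3,1] := by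
  induction n using Nat.strong_induction_on generalizing a v with
  | _ n ih =>
  rcases n with _ | _ | m
  · simp [mm] at h; subst h
    exact ⟨short_avoids (by simp), short_avoids (by simp)⟩
  · simp [mm] at h; subst h
    exact ⟨short_avoids (by simp), short_avoids (by simp)⟩
  · simp only [mm, List.mem_append, List.mem_map] at h
    rcases h with ⟨w, hw, rfl⟩ | ⟨w, hw, rfl⟩
    · -- v = a :: w, w values in [a+1, a+m+2)
      have hwb : ∀ x ∈ w, a + 1 ≤ x ∧ x < a + 1 + (m+1) := fun x hx => mem_bounds (mm_perm hw) hx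
      constructor
      · rintro hC
        obtain ⟨x, y, z, hs, hyx, hxz⟩ := contains213_elim hC
        rcases List.sublist_cons_iff.mp hs with hs' | ⟨r, heq, hs'⟩
        · exact (ih (m+1) (by omega) hw).1 (contains213 hs' hyx hxz)
        · obtain ⟨rfl, rfl⟩ : x = a ∧ r = [y, z] := by
            constructor <;> [skip; skip] <;> injection heq with h1 h2 <;> simp_all
          have := hwb y (hs'.subset (by simp))
          omega
      · rintro hC
        obtain ⟨x, y, z, hs, hzx, hxy⟩ := contains231_elim hC
        rcases List.sublist_cons_iff.mp hs with hs' | ⟨r, heq, hs'⟩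
        · exact (ih (m+1) (by omega) hw).2 (contains231 hs' hzx hxy)
        · obtain ⟨rfl, rfl⟩ : x = a ∧ r = [y, z] := by
            constructor <;> [skip; skip] <;> injection heq with h1 h2 <;> simp_all
          have := hwb z (hs'.subset (by simp))
          omega
    · -- v = (a+m+1) :: w, w values in [a, a+m+1)
      have hwb : ∀ x ∈ w, a ≤ x ∧ x < a + (m+1) := fun x hx => mem_bounds (mm_perm hw) hx
      constructor
      · rintro hC
        obtain ⟨x, y, z, hs, hyx, hxz⟩ := contains213_elim hC
        rcases List.sublist_cons_iff.mp hs with hs' | ⟨r, heq, hs'⟩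
        · exact (ih (m+1) (by omega) hw).1 (contains213 hs' hyx hxz)
        · obtain ⟨rfl, rfl⟩ : x = a + m + 1 ∧ r = [y, z] := by
            constructor <;> [skip; skip] <;> injection heq with h1 h2 <;> simp_all
          have := hwb z (hs'.subset (by simp))
          omega
      · rintro hC
        obtain ⟨x, y, z, hs, hzx, hxy⟩ := contains231_elim hC
        rcases List.sublist_cons_iff.mp hs with hs' | ⟨r, heq, hs'⟩
        · exact (ih (m+1) (by omega) hw).2 (contains231 hs' hzx hxy)
        · obtain ⟨rfl, rfl⟩ : x = a + m + 1 ∧ r = [y, z] := by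
            constructor <;> [skip; skip] <;> injection heq with h1 h2 <;> simp_all
          have := hwb y (hs'.subset (by simp))
          omega

lemma mm_complete {n a : ℕ} {v : List ℕ} (hp : v.Perm (List.range' a n))
    (h1 : Avoids v [2,1,3]) (h2 : Avoids v [2,3,1]) : v ∈ mm a n := by
  induction n using Nat.strong_induction_on generalizing a v with
  | _ n ih =>
  rcases n with _ | _ | m
  · have : v = [] := by simpa using hp
    simp [mm, this]
  · have : v = [a] := by
      rw [show List.range' a 1 = [a] by simp [List.range']] at hp
      exact List.perm_singleton.mp hp
    simp [mm, this]
  · rcases v with _ | ⟨y, w⟩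
    · have := hp.length_eq; simp at this
    · have hy : a ≤ y ∧ y < a + (m+2) := mem_bounds hp (by simp)
      have hrs : List.range' a (m+2) = a :: List.range' (a+1) (m+1) := List.range'_succ (s := a) (n := m+1) (step := 1)
      have hrc : List.range' a (m+2) = List.range' a (m+1) ++ [a+(m+1)] := by
        rw [show m+2 = m+1+1 from rfl]; simpa using List.range'_concat (step := 1) (s := a) (n := m+1)
      have hw1 : Avoids w [2,1,3] := avoids_sublist (List.sublist_cons_self y w) h1
      have hw2 : Avoids w [2,3,1] := avoids_sublist (List.sublist_cons_self y w) h2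
      by_cases hya : y = a
      · subst hya
        have hwp : w.Perm (List.range' (y+1) (m+1)) := by
          rw [hrs] at hp
          exact hp.cons_inv
        have := ih (m+1) (by omega) hwp hw1 hw2
        simp only [mm, List.mem_append, List.mem_map]
        exact Or.inl ⟨w, this, rfl⟩
      · by_cases hyT : y = a + m + 1
        · have hwp : w.Perm (List.range' a (m+1)) := by
            have : (y :: w).Perm (y :: List.range' a (m+1)) := by
              refine hp.trans ?_
              rw [hrc]
              have : a + (m+1) = y := by omega
              rw [this]
              exact List.perm_append_singleton _ _
            exact this.cons_inv
          have := ih (m+1) (by omega) hwp hw1 hw2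
          simp only [mm, List.mem_append, List.mem_map]
          refine Or.inr ⟨w, this, ?_⟩
          rw [hyT]
        · exfalso
          have hav : a ∈ y :: w := hp.mem_iff.mpr (by simp)
          have hTv : a + m + 1 ∈ y :: w := hp.mem_iff.mpr (by simp; omega)
          have haw : a ∈ w := by
            rcases List.mem_cons.mp hav with h | h
            · exact absurd h.symm hya
            · exact h
          have hTw : a + m + 1 ∈ w := by
            rcases List.mem_cons.mp hTv with h | h
            · exact absurd h.symm hyT
            · exact h
          obtain ⟨p, q, rfl⟩ := List.append_of_mem haw
          rcases List.mem_append.mp hTw with hTp | hTq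
          · -- [y, a+m+1, a] is a 231 pattern
            have hs : List.Sublist [y, a+m+1, a] (y :: (p ++ a :: q)) := by
              refine List.Sublist.cons₂ y ?_
              exact List.Sublist.append (List.singleton_sublist.mpr hTp)
                (List.Sublist.cons₂ a (List.nil_sublist q))
            exact h2 (contains231 hs (by omega) (by omega))
          · have hTq' : a + m + 1 ∈ q := by
              rcases List.mem_cons.mp hTq with h | h
              · omega
              · exact h
            -- [y, a, a+m+1] is a 213 pattern
            have hs : List.Sublist [y, a, a+m+1] (y :: (p ++ a :: q)) := by
              refine List.Sublist.cons₂ y ?_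
              refine List.Sublist.trans ?_ (List.sublist_append_right p _)
              exact List.Sublist.cons₂ a (List.singleton_sublist.mpr hTq')
            exact h1 (contains213 hs (by omega) (by omega))

lemma mm_nodup {n a : ℕ} : (mm a n).Nodup := by
  induction n using Nat.strong_induction_on generalizing a with
  | _ n ih =>
  rcases n with _ | _ | m
  · simp [mm]
  · simp [mm]
  · rw [mm, List.nodup_append']
    refine ⟨(ih (m+1) (by omega)).map (fun w w' h => by injection h),
      (ih (m+1) (by omega)).map (fun w w' h => by injection h), ?_⟩
    intro x hx hx'
    simp only [List.mem_map] at hx hx'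
    obtain ⟨w, -, rfl⟩ := hx
    obtain ⟨w', -, h⟩ := hx'
    injection h with h1 _
    omega

def B : ℕ → ℕ
  | 0 => 1
  | 1 => 1
  | n+2 => 2 * B (n+1)

lemma mm_length {n : ℕ} : ∀ a, (mm a n).length = B n := by
  induction n using Nat.strong_induction_on with
  | _ n ih =>
  intro a
  rcases n with _ | _ | m
  · simp [mm, B]
  · simp [mm, B]
  · rw [mm, B]
    simp only [List.length_append, List.length_map, ih (m+1) (by omega)]
    omega
lemma av_sound {n a : ℕ} {π : List ℕ} (h : π ∈ av a n) :
    π.Perm (List.range' a n) ∧ Avoids π [2,3,1] ∧ Avoids π [4,2,1,3] := by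
  induction n using Nat.strong_induction_on generalizing a π with
  | _ n ih =>
  rcases n with _ | m
  · simp [av] at h
    exact ⟨by simp [h], short_avoids (by simp [h]), short_avoids (by simp [h])⟩
  · obtain ⟨k, hk, u, hu, v, hv, rfl⟩ := mem_av_succ.mp h
    obtain ⟨hup, hu231, hu4213⟩ := ih k (by omega) hu
    have hvp := mm_perm hv
    obtain ⟨hv213, hv231⟩ := mm_avoids hv
    have hub : ∀ x ∈ u, a ≤ x ∧ x < a + k := fun x hx => mem_bounds hup hx
    have hvb : ∀ x ∈ v, a + k ≤ x ∧ x < a + m := by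
      intro x hx
      have := mem_bounds hvp hx
      omega
    have hperm : (u ++ (a+m) :: v).Perm (List.range' a (m+1)) := by
      have h1 : (u ++ v).Perm (List.range' a m) := by
        have := hup.append hvp
        rw [List.range'_append_1] at this
        rwa [show k + (m - k) = m by omega] at this
      have h2 : List.range' a (m+1) = List.range' a m ++ [a+m] := by
        rw [show m+1 = m+0+1 from rfl]
        simpa using List.range'_concat (step := 1) (s := a) (n := m)
      calc u ++ (a+m) :: v ~ (a+m) :: (u ++ v) := List.perm_middle
        _ ~ (a+m) :: List.range' a m := h1.cons _
        _ ~ List.range' a m ++ [a+m] := (List.perm_append_singleton _ _).symm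
        _ = List.range' a (m+1) := h2.symm
    refine ⟨hperm, ?_, ?_⟩
    · rintro hC
      obtain ⟨x, y, z, hs, hzx, hxy⟩ := contains231_elim hC
      obtain ⟨t1, t2, heq, hs1, hs2⟩ := List.sublist_append_iff.mp hs
      rcases t1 with _ | ⟨p1, t1⟩
      · simp only [List.nil_append] at heq
        subst heq
        rcases List.sublist_cons_iff.mp hs2 with hs' | ⟨r, heq, hs'⟩
        · exact hv231 (contains231 hs' hzx hxy)
        · injection heq with h1 h2
          subst h1 h2
          have := hvb y (hs'.subset (by simp))
          omega
      · rcases t1 with _ | ⟨p2, t1⟩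
        · injection heq with h1 h2
          subst h1 h2
          have hxu := hub x (hs1.subset (by simp))
          have hz : z ∈ (a+m) :: v := hs2.subset (by simp)
          rcases List.mem_cons.mp hz with h' | h'
          · omega
          · have := hvb z h'
            omega
        · rcases t1 with _ | ⟨p3, t1⟩
          · injection heq with h1 heq'
            injection heq' with h2 h3
            subst h1 h2 h3
            have hyu := hub y (hs1.subset (by simp))
            have hz : z ∈ (a+m) :: v := hs2.subset (by simp)
            rcases List.mem_cons.mp hz with h' | h'
            · omega
            · have := hvb z h'
              omega
          · injection heq with h1 heq'
            injection heq' with h2 heq''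
            injection heq'' with h3 heq'''
            obtain ⟨rfl, rfl⟩ := List.append_eq_nil_iff.mp heq'''.symm
            subst h1 h2 h3
            exact hu231 (contains231 hs1 hzx hxy)
    · rintro hC
      obtain ⟨w, x, y, z, hs, hyx, hxz, hzw⟩ := contains4213_elim hC
      obtain ⟨t1, t2, heq, hs1, hs2⟩ := List.sublist_append_iff.mp hs
      rcases t1 with _ | ⟨p1, t1⟩
      · simp only [List.nil_append] at heq
        subst heq
        rcases List.sublist_cons_iff.mp hs2 with hs' | ⟨r, heq, hs'⟩
        · exact hv213 (contains213 ((List.sublist_cons_self w [x,y,z]).trans hs') hyx hxz)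
        · injection heq with h1 h2
          subst h1 h2
          exact hv213 (contains213 hs' hyx hxz)
      · rcases t1 with _ | ⟨p2, t1⟩
        · injection heq with h1 h2
          subst h1 h2
          have hwu := hub w (hs1.subset (by simp))
          have hx : x ∈ (a+m) :: v := hs2.subset (by simp)
          rcases List.mem_cons.mp hx with h' | h'
          · omega
          · have := hvb x h'
            omega
        · rcases t1 with _ | ⟨p3, t1⟩
          · injection heq with h1 heq'
            injection heq' with h2 h3
            subst h1 h2 h3
            have hwu := hub w (hs1.subset (by simp))
            have hy : y ∈ (a+m) :: v := hs2.subset (by simp)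
            rcases List.mem_cons.mp hy with h' | h'
            · omega
            · have := hvb y h'
              omega
          · rcases t1 with _ | ⟨p4, t1⟩
            · injection heq with h1 heq'
              injection heq' with h2 heq''
              injection heq'' with h3 h4
              subst h1 h2 h3 h4
              have hwu := hub w (hs1.subset (by simp))
              have hz : z ∈ (a+m) :: v := hs2.subset (by simp)
              rcases List.mem_cons.mp hz with h' | h'
              · omega
              · have := hvb z h'
                omega
            · injection heq with h1 heq'
              injection heq' with h2 heq''
              injection heq'' with h3 heq'''
              injection heq''' with h4 heq''''
              obtain ⟨rfl, rfl⟩ := List.append_eq_nil_iff.mp heq''''.symm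
              subst h1 h2 h3 h4
              exact hu4213 (contains4213 hs1 hyx hxz hzw)

lemma av_complete {n a : ℕ} {π : List ℕ} (hp : π.Perm (List.range' a n))
    (h231 : Avoids π [2,3,1]) (h4213 : Avoids π [4,2,1,3]) : π ∈ av a n := by
  induction n using Nat.strong_induction_on generalizing a π with
  | _ n ih =>
  rcases n with _ | m
  · have : π = [] := by simpa using hp
    simp [av, this]
  · have hM : a + m ∈ π := hp.mem_iff.mpr (by simp)
    obtain ⟨u, v, rfl⟩ := List.append_of_mem hM
    have hnd : (u ++ (a+m) :: v).Nodup := hp.symm.nodup (List.nodup_range' (s := a) (n := m+1))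
    obtain ⟨hund, hMvnd, hdisj⟩ := List.nodup_append'.mp hnd
    have hMu : a + m ∉ u := fun hx => hdisj hx (by simp)
    have hMv : a + m ∉ v := (List.nodup_cons.mp hMvnd).1
    have hvnd : v.Nodup := (List.nodup_cons.mp hMvnd).2
    have hb : ∀ x ∈ u ++ (a+m) :: v, a ≤ x ∧ x < a + (m+1) := fun x hx => mem_bounds hp hx
    have step2 : ∀ x ∈ u, ∀ y ∈ v, x < y := by
      intro x hx y hy
      have hxb := hb x (List.mem_append.mpr (Or.inl hx))
      have hyb := hb y (List.mem_append.mpr (Or.inr (by simp [hy])))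
      have hxM : x ≠ a + m := fun h => hMu (h ▸ hx)
      have hyM : y ≠ a + m := fun h => hMv (h ▸ hy)
      have hxy : x ≠ y := fun h => hdisj hx (by simp [h, hy])
      by_contra hlt
      have hylt : y < x := by omega
      have hsub : List.Sublist [x, a+m, y] (u ++ (a+m) :: v) :=
        List.Sublist.append (List.singleton_sublist.mpr hx)
          (List.Sublist.cons₂ _ (List.singleton_sublist.mpr hy))
      exact h231 (contains231 hsub hylt (by omega))
    set k := u.length with hkdef
    have hlen : (u ++ (a+m) :: v).length = m + 1 := by
      rw [hp.length_eq]
      simp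
    have hk : k ≤ m := by
      simp [hkdef] at hlen ⊢
      omega
    have step4 : (u ++ v).Perm (List.range' a m) := by
      have h2 : List.range' a (m+1) = List.range' a m ++ [a+m] := by
        rw [show m+1 = m+0+1 from rfl]
        simpa using List.range'_concat (step := 1) (s := a) (n := m)
      have hc : ((a+m) :: (u ++ v)).Perm ((a+m) :: List.range' a m) := by
        calc (a+m) :: (u ++ v) ~ u ++ (a+m) :: v := List.perm_middle.symm
          _ ~ List.range' a (m+1) := hp
          _ = List.range' a m ++ [a+m] := h2
          _ ~ (a+m) :: List.range' a m := List.perm_append_singleton _ _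
      exact hc.cons_inv
    have step5 : u.Perm (List.range' a k) := by
      have hus : u ⊆ List.range' a k := by
        intro x hx
        have hxb := hb x (List.mem_append.mpr (Or.inl hx))
        rw [List.mem_range'_1]
        refine ⟨hxb.1, ?_⟩
        by_contra hge
        have hxk : a + k ≤ x := by omega
        have hex : ∃ y ∈ List.range' a k, y ∉ u := by
          by_contra hall
          push_neg at hall
          have hins : insert x (List.range' a k).toFinset ⊆ u.toFinset := by
            intro z hz
            rcases Finset.mem_insert.mp hz with rfl | hz'
            · exact List.mem_toFinset.mpr hx
            · exact List.mem_toFinset.mpr (hall z (List.mem_toFinset.mp hz'))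
          have hxnot : x ∉ (List.range' a k).toFinset := by
            rw [List.mem_toFinset, List.mem_range'_1]
            omega
          have hcard := Finset.card_le_card hins
          rw [Finset.card_insert_of_notMem hxnot,
            List.toFinset_card_of_nodup (List.nodup_range' (s := a) (n := k)),
            List.toFinset_card_of_nodup hund] at hcard
          rw [List.length_range'] at hcard
          omega
        obtain ⟨y, hy, hyu⟩ := hex
        have hyb := List.mem_range'_1.mp hy
        have hym : y ∈ List.range' a m := List.mem_range'_1.mpr ⟨hyb.1, by omega⟩
        have hyuv : y ∈ u ++ v := step4.mem_iff.mpr hym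
        have hyv : y ∈ v := (List.mem_append.mp hyuv).resolve_left hyu
        have := step2 x hx y hyv
        omega
      have hsp := hund.subperm hus
      refine hsp.perm_of_length_le ?_
      simp [List.length_range', hkdef]
    have step6 : v.Perm (List.range' (a+k) (m-k)) := by
      have h3 : (u ++ v).Perm (u ++ List.range' (a+k) (m-k)) := by
        calc u ++ v ~ List.range' a m := step4
          _ = List.range' a k ++ List.range' (a+k) (m-k) := by
              rw [List.range'_append_1, show k + (m - k) = m by omega]
          _ ~ u ++ List.range' (a+k) (m-k) := (step5.symm).append_right _
      exact ((List.perm_append_left_iff u).mp h3)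
    have hu_sub : List.Sublist u (u ++ (a+m) :: v) := List.sublist_append_left _ _
    have hv_sub : List.Sublist v (u ++ (a+m) :: v) :=
      (List.sublist_cons_self _ _).trans (List.sublist_append_right _ _)
    have hu231 := avoids_sublist hu_sub h231
    have hu4213 := avoids_sublist hu_sub h4213
    have hv231 := avoids_sublist hv_sub h231
    have hv213 : Avoids v [2,1,3] := by
      rintro hC
      obtain ⟨x, y, z, hs, hyx, hxz⟩ := contains213_elim hC
      have hsub : List.Sublist [a+m, x, y, z] (u ++ (a+m) :: v) :=
        (List.Sublist.cons₂ _ hs).trans (List.sublist_append_right _ _)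
      have hz : z ∈ v := hs.subset (by simp)
      have hzb := hb z (List.mem_append.mpr (Or.inr (by simp [hz])))
      have hzM : z ≠ a + m := fun h => hMv (h ▸ hz)
      exact h4213 (contains4213 hsub hyx hxz (by omega))
    have hu_mem : u ∈ av a k := ih k (by omega) step5 hu231 hu4213
    have hv_mem : v ∈ mm (a+k) (m-k) := mm_complete step6 hv213 hv231
    exact mem_av_succ.mpr ⟨k, hk, u, hu_mem, v, hv_mem, rfl⟩
lemma takeWhile_block {u v : List ℕ} {M : ℕ} (hM : M ∉ u) :
    (u ++ M :: v).takeWhile (fun x => decide (x ≠ M)) = u := by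
  induction u with
  | nil => simp
  | cons x u ih =>
    simp only [List.mem_cons, not_or] at hM
    have hxM : ¬ (x = M) := fun h => hM.1 h.symm
    have hrec := ih hM.2
    simp only [ne_eq, decide_not] at hrec
    simp [List.takeWhile_cons, hxM, hrec]

lemma decomp_inj {M : ℕ} {u v u' v' : List ℕ} (hu : M ∉ u) (hu' : M ∉ u')
    (h : u ++ M :: v = u' ++ M :: v') : u = u' ∧ v = v' := by
  have h1 : u = u' := by
    have := congrArg (List.takeWhile (fun x => decide (x ≠ M))) h
    rwa [takeWhile_block hu, takeWhile_block hu'] at this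
  subst h1
  have h2 := List.append_cancel_left h
  exact ⟨rfl, by injection h2⟩

lemma av_M_not_mem {a k m : ℕ} {u : List ℕ} (hu : u ∈ av a k) (hk : k ≤ m) :
    a + m ∉ u := by
  intro hmem
  have := mem_bounds (av_sound hu).1 hmem
  omega

lemma av_length_eq {a k : ℕ} {u : List ℕ} (hu : u ∈ av a k) : u.length = k := by
  rw [(av_sound hu).1.length_eq, List.length_range']

lemma av_nodup {n a : ℕ} : (av a n).Nodup := by
  induction n using Nat.strong_induction_on generalizing a with
  | _ n ih =>
  rcases n with _ | m
  · simp [av]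
  · rw [av_succ, List.nodup_flatMap]
    constructor
    · intro k hk
      have hkm : k ≤ m := by simpa [Nat.lt_succ_iff] using hk
      rw [List.nodup_flatMap]
      constructor
      · intro u hu
        refine List.Nodup.map ?_ mm_nodup
        intro v v' hvv
        have := List.append_cancel_left hvv
        injection this
      · refine (ih k (by omega)).imp_of_mem ?_
        intro u u' hu hu' hne x hx hx'
        simp only [List.mem_map] at hx hx'
        obtain ⟨v, -, rfl⟩ := hx
        obtain ⟨v', -, hfeq⟩ := hx'
        exact hne (decomp_inj (av_M_not_mem hu hkm) (av_M_not_mem hu' hkm) hfeq.symm).1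
    · refine List.nodup_range.imp_of_mem ?_
      intro k k' hk hk' hne x hx hx'
      have hkm : k ≤ m := by simpa [Nat.lt_succ_iff] using hk
      have hkm' : k' ≤ m := by simpa [Nat.lt_succ_iff] using hk'
      simp only [List.mem_flatMap, List.mem_map] at hx hx'
      obtain ⟨u, hu, v, -, rfl⟩ := hx
      obtain ⟨u', hu', v', -, hfeq⟩ := hx'
      have := (decomp_inj (av_M_not_mem hu hkm) (av_M_not_mem hu' hkm') hfeq.symm).1
      apply hne
      rw [← av_length_eq hu, ← av_length_eq hu', this]


lemma av_length_succ (a n : ℕ) : (av a (n+1)).length =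
    ((List.range (n+1)).map (fun k => (av a k).length * B (n-k))).sum := by
  rw [av_succ, List.length_flatMap]
  congr 1
  refine List.map_congr_left ?_
  intro k hk
  show ((av a k).flatMap fun u => (mm (a+k) (n-k)).map (fun v => u ++ (a+n) :: v)).length = _
  rw [List.length_flatMap]
  have hc : (List.map (List.length ∘ fun u => (mm (a+k) (n-k)).map (fun v => u ++ (a+n) :: v))
      (av a k)) = List.map (fun _ => B (n-k)) (av a k) := by
    refine List.map_congr_left ?_
    intro u hu
    show ((mm (a+k) (n-k)).map (fun v => u ++ (a+n) :: v)).length = B (n-k)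
    rw [List.length_map, mm_length]
  simp only [Function.comp_def] at hc
  rw [hc, List.map_const', List.sum_const_nat]

def A (n : ℕ) : ℕ := (av 1 n).length

lemma A_zero : A 0 = 1 := by simp [A, av]

lemma A_succ (n : ℕ) : A (n+1) = ((List.range (n+1)).map (fun k => A k * B (n-k))).sum :=
  av_length_succ 1 n

lemma sum_map_double (l : List ℕ) (g : ℕ → ℕ) :
    (l.map (fun k => 2 * g k)).sum = 2 * (l.map g).sum := by
  induction l with
  | nil => simp
  | cons x l ih => simp [ih, Nat.mul_add]

lemma A_rec (n : ℕ) : A (n+2) + A n = 3 * A (n+1) := by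
  have hS1 : A (n+1) = ((List.range n).map (fun k => A k * B (n-k))).sum + A n := by
    rw [A_succ, List.range_succ, List.map_append, List.sum_append]
    simp [Nat.sub_self, B]
  have hS2 : A (n+2) = ((List.range (n+1)).map (fun k => A k * B (n+1-k))).sum + A (n+1) := by
    rw [A_succ (n+1), List.range_succ, List.map_append, List.sum_append]
    simp [Nat.sub_self, B]
  have hS3 : ((List.range (n+1)).map (fun k => A k * B (n+1-k))).sum
      = 2 * ((List.range n).map (fun k => A k * B (n-k))).sum + A n := by
    rw [List.range_succ, List.map_append, List.sum_append]
    have hmain : (List.range n).map (fun k => A k * B (n+1-k))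
        = (List.range n).map (fun k => 2 * (A k * B (n-k))) := by
      refine List.map_congr_left ?_
      intro k hk
      have hk' : k < n := List.mem_range.mp hk
      obtain ⟨j, hj⟩ : ∃ j, n - k = j + 1 := ⟨n - k - 1, by omega⟩
      rw [show n+1-k = j+2 by omega, hj, B]
      ring
    rw [hmain, sum_map_double]
    have hlast : (List.map (fun k => A k * B (n+1-k)) [n]).sum = A n := by
      simp [show n+1-n = 1 by omega, B]
    rw [hlast]
  omega

lemma A_one : A 1 = 1 := by
  rw [A_succ]
  simp [List.range_succ, A_zero, B]

lemma A_fib (n : ℕ) : A (n+1) = Nat.fib (2*n+1) := by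
  have key : ∀ n, A (n+1) = Nat.fib (2*n+1) ∧ A (n+2) = Nat.fib (2*n+3) := by
    intro n
    induction n with
    | zero =>
      constructor
      · rw [A_one]; decide
      · have h0 : A 2 + A 0 = 3 * A 1 := A_rec 0
        rw [A_zero, A_one] at h0
        have h2 : A 2 = 2 := by omega
        rw [h2]; decide
    | succ n ih =>
      obtain ⟨ih1, ih2⟩ := ih
      constructor
      · rw [show 2*(n+1)+1 = 2*n+3 by ring]
        exact ih2
      · have hr : A (n+3) + A (n+1) = 3 * A (n+2) := A_rec (n+1)
        have e1 := Nat.fib_add_two (n := 2*n+3)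
        have e2 := Nat.fib_add_two (n := 2*n+2)
        have e3 := Nat.fib_add_two (n := 2*n+1)
        simp only [show 2*n+3+2 = 2*n+5 by omega, show 2*n+3+1 = 2*n+4 by omega,
          show 2*n+2+2 = 2*n+4 by omega, show 2*n+2+1 = 2*n+3 by omega,
          show 2*n+1+2 = 2*n+3 by omega, show 2*n+1+1 = 2*n+2 by omega] at e1 e2 e3
        rw [show 2*(n+1)+3 = 2*n+5 by ring]
        show A (n+3) = Nat.fib (2*n+5)
        omega
  exact (key n).1
end PSBProof


theorem psb_sortable_count (n : ℕ) (hn : 1 ≤ n) :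
    Nat.card {π : List ℕ // IsPermList n π ∧ Avoids π [2, 3, 1] ∧ Avoids π [4, 2, 1, 3]}
      = Nat.fib (2 * n - 1) := by
  obtain ⟨m, rfl⟩ : ∃ m, n = m + 1 := ⟨n - 1, by omega⟩
  have key : ∀ π : List ℕ,
      (IsPermList (m+1) π ∧ Avoids π [2,3,1] ∧ Avoids π [4,2,1,3]) ↔
        π ∈ (PSBProof.av 1 (m+1)).toFinset := by
    intro π
    rw [List.mem_toFinset]
    constructor
    · rintro ⟨h1, h2, h3⟩
      exact PSBProof.av_complete h1 h2 h3
    · intro h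
      obtain ⟨h1, h2, h3⟩ := PSBProof.av_sound h
      exact ⟨h1, h2, h3⟩
  rw [Nat.card_congr (Equiv.subtypeEquivRight key)]
  rw [Nat.card_eq_fintype_card, Fintype.card_coe]
  rw [List.toFinset_card_of_nodup PSBProof.av_nodup]
  have hfib := PSBProof.A_fib m
  rw [show 2 * (m+1) - 1 = 2*m+1 by omega]
  exact hfib
end

section
/- For n ≥ 1, the number of Motzkin paths with a total of n up and horizontal steps, with no peaks, and in which every maximal run of down steps ends at height 0, equals the Fibonacci number F(2n-1), where F(1) = F(2) = 1. -/
/-- A Motzkin path, encoded as its list of steps (`1` = up, `0` = horizontal,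
`-1` = down): it stays weakly above the axis and ends at height `0`. -/
def IsMotzkin (p : List ℤ) : Prop :=
  (∀ s ∈ p, s = 1 ∨ s = 0 ∨ s = -1) ∧
    (∀ i ≤ p.length, 0 ≤ (p.take i).sum) ∧ p.sum = 0

/-- No up step is immediately followed by a down step. -/
def NoPeak (p : List ℤ) : Prop :=
  ∀ i, i + 1 < p.length → ¬(p[i]! = 1 ∧ p[i + 1]! = -1)

/-- Every maximal run of down steps ends at height `0`. -/
def DownRunsReachBottom (p : List ℤ) : Prop :=
  ∀ i < p.length, p[i]! = -1 → (i + 1 = p.length ∨ p[i + 1]! ≠ -1) →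
    (p.take (i + 1)).sum = 0

/-- The total number of up and horizontal steps of `p`. -/
def upHorizCount (p : List ℤ) : ℕ := p.countP (fun s => decide (s ≠ -1))

/- ==== auxiliary development ==== -/

/-- Recursive characterization of valid suffixes from height `h`. -/
def Good : ℤ → List ℤ → Prop
  | h, [] => h = 0
  | h, a :: v => (a = 1 ∨ a = 0 ∨ a = -1) ∧ 0 ≤ h ∧
      (a = -1 → v.head? ≠ some (-1) → h + a = 0) ∧
      ¬(a = 1 ∧ v.head? = some (-1)) ∧ Good (h + a) v

def NN (h : ℤ) (v : List ℤ) : Prop := ∀ i ≤ v.length, 0 ≤ h + (v.take i).sum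

def DRB (h : ℤ) (v : List ℤ) : Prop := ∀ i < v.length, v[i]! = -1 →
    (i + 1 = v.length ∨ v[i + 1]! ≠ -1) → h + (v.take (i + 1)).sum = 0

lemma nn_cons (h a : ℤ) (v : List ℤ) : NN h (a :: v) ↔ 0 ≤ h ∧ NN (h + a) v := by
  constructor
  · intro H
    refine ⟨by simpa using H 0 (Nat.zero_le _), fun i hi => ?_⟩
    have := H (i + 1) (by simpa using Nat.succ_le_succ hi)
    simpa [add_assoc] using this
  · rintro ⟨h0, H⟩ i hi
    cases i with
    | zero => simpa using h0
    | succ j =>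
      have := H j (by simpa using Nat.succ_le_succ_iff.mp hi)
      simpa [add_assoc] using this

lemma head?_ne_iff (v : List ℤ) : v.head? ≠ some (-1) ↔ (v = [] ∨ v[0]! ≠ -1) := by
  cases v <;> simp

lemma noPeak_cons (a : ℤ) (v : List ℤ) :
    NoPeak (a :: v) ↔ ¬(a = 1 ∧ v.head? = some (-1)) ∧ NoPeak v := by
  constructor
  · intro H
    constructor
    · rintro ⟨ha, hv⟩
      cases v with
      | nil => simp at hv
      | cons b w =>
        have hb : b = -1 := by simpa using hv
        exact H 0 (by simp) ⟨by simpa using ha, by simp [hb]⟩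
    · intro i hi hp
      exact H (i + 1) (by simpa using Nat.succ_lt_succ hi) (by simpa using hp)
  · rintro ⟨h1, h2⟩ i hi hp
    cases i with
    | zero =>
      obtain ⟨hp1, hp2⟩ := hp
      have hv : v ≠ [] := by
        intro h; subst h; simp at hi
      cases v with
      | nil => simp at hi
      | cons b w =>
        exact h1 ⟨by simpa using hp1, by simpa using hp2⟩
    | succ j =>
      exact h2 j (by simpa using Nat.lt_of_succ_lt_succ hi) (by simpa using hp)

lemma drb_cons (h a : ℤ) (v : List ℤ) :
    DRB h (a :: v) ↔ (a = -1 → v.head? ≠ some (-1) → h + a = 0) ∧ DRB (h + a) v := by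
  constructor
  · intro H
    constructor
    · intro ha hv
      have h0 := H 0 (by simp) (by simpa using ha) ?_
      · simpa using h0
      · rcases (head?_ne_iff v).mp hv with h | h
        · left; simp [h]
        · right; simpa using h
    · intro i hi hvi hnext
      have := H (i + 1) (by simpa using Nat.succ_lt_succ hi) (by simpa using hvi) ?_
      · simpa [add_assoc] using this
      · rcases hnext with h | h
        · left; simpa using congrArg Nat.succ h
        · right; simpa using h
  · rintro ⟨h1, h2⟩ i hi hvi hnext
    cases i with
    | zero =>
      have ha : a = -1 := by simpa using hvi
      have hv : v.head? ≠ some (-1) := by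
        rw [head?_ne_iff]
        rcases hnext with h | h
        · left; cases v with
          | nil => rfl
          | cons b w => simp at h
        · right; simpa using h
      simpa using h1 ha hv
    | succ j =>
      have := h2 j (by simpa using Nat.lt_of_succ_lt_succ hi) (by simpa using hvi) ?_
      · simpa [add_assoc] using this
      · rcases hnext with h | h
        · left; simp at h; omega
        · right; simpa using h

lemma good_iff (v : List ℤ) : ∀ h : ℤ, Good h v ↔
    (∀ s ∈ v, s = 1 ∨ s = 0 ∨ s = -1) ∧ NN h v ∧ h + v.sum = 0 ∧ NoPeak v ∧ DRB h v := by
  induction v with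
  | nil =>
    intro h
    simp only [Good]
    constructor
    · rintro rfl
      refine ⟨by simp, fun i hi => by simp at hi ⊢, by simp, fun i hi => by simp at hi,
        fun i hi => by simp at hi⟩
    · rintro ⟨-, -, h0, -, -⟩
      simpa using h0
  | cons a v ih =>
    intro h
    simp only [Good, nn_cons, noPeak_cons, drb_cons, List.mem_cons, List.sum_cons, ih (h + a)]
    constructor
    · rintro ⟨ha, h0, hd, hpk, hs, hnn, hsum, hnp, hdrb⟩
      exact ⟨fun s hs' => hs'.elim (fun e => e ▸ ha) (hs s), ⟨h0, hnn⟩,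
        by linarith [hsum], ⟨hpk, hnp⟩, ⟨hd, hdrb⟩⟩
    · rintro ⟨hstep, ⟨h0, hnn⟩, hsum, ⟨hpk, hnp⟩, ⟨hd, hdrb⟩⟩
      exact ⟨hstep a (Or.inl rfl), h0, hd, hpk, fun s hs' => hstep s (Or.inr hs'), hnn,
        by linarith [hsum], hnp, hdrb⟩

lemma good_zero_iff (p : List ℤ) :
    Good 0 p ↔ IsMotzkin p ∧ NoPeak p ∧ DownRunsReachBottom p := by
  rw [good_iff]
  unfold IsMotzkin NN DRB DownRunsReachBottom
  simp only [zero_add]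
  tauto

lemma good_zero_head (u : List ℤ) (hu : Good 0 u) : u.head? ≠ some (-1) := by
  cases u with
  | nil => simp
  | cons a w =>
    simp only [List.head?_cons, ne_eq, Option.some.injEq]
    intro ha
    subst ha
    obtain ⟨-, -, h3, -, hg⟩ := hu
    cases w with
    | nil => simp [Good] at hg
    | cons b y =>
      by_cases hb : b = -1
      · obtain ⟨-, h0, -⟩ := hg
        omega
      · have := h3 rfl (by simp [hb])
        omega

lemma good_replicate (k : ℕ) (u : List ℤ) (hu : Good 0 u) :
    Good (k : ℤ) (List.replicate k (-1) ++ u) := by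
  induction k with
  | zero => simpa using hu
  | succ m ih =>
    have : List.replicate (m + 1) (-1 : ℤ) ++ u = -1 :: (List.replicate m (-1) ++ u) := by
      simp [List.replicate_succ]
    rw [this]
    refine ⟨by simp, by positivity, ?_, by simp, ?_⟩
    · intro _ hh
      cases m with
      | zero => omega
      | succ l =>
        exfalso
        apply hh
        simp [List.replicate_succ]
    · have he : (((m + 1 : ℕ)) : ℤ) + (-1) = (m : ℤ) := by push_cast; ring
      rw [he]
      exact ih

lemma good_down (k : ℕ) : ∀ u : List ℤ, Good ((k : ℤ) + 1) u → u.head? = some (-1) →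
    ∃ w, u = List.replicate (k + 1) (-1) ++ w ∧ Good 0 w := by
  induction k with
  | zero =>
    intro u hu hh
    cases u with
    | nil => simp at hh
    | cons a w =>
      have ha : a = -1 := by simpa using hh
      subst ha
      obtain ⟨-, -, -, -, hg⟩ := hu
      have he : (((0 : ℕ)) : ℤ) + 1 + (-1) = 0 := by norm_num
      rw [he] at hg
      exact ⟨w, by simp, hg⟩
  | succ m ih =>
    intro u hu hh
    cases u with
    | nil => simp at hh
    | cons a w =>
      have ha : a = -1 := by simpa using hh
      subst ha
      obtain ⟨-, -, h3, -, hg⟩ := hu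
      have he : (((m + 1 : ℕ)) : ℤ) + 1 + (-1) = (m : ℤ) + 1 := by push_cast; ring
      rw [he] at hg
      have hw : w.head? = some (-1) := by
        by_contra hc
        have := h3 rfl hc
        omega
      obtain ⟨w', hw', hgw'⟩ := ih w hg hw
      exact ⟨w', by simp [hw', List.replicate_succ], hgw'⟩

lemma uhc_cons (a : ℤ) (v : List ℤ) :
    upHorizCount (a :: v) = (if a = -1 then 0 else 1) + upHorizCount v := by
  simp only [upHorizCount, List.countP_cons]
  by_cases h : a = -1 <;> simp [h] <;> omega

lemma uhc_replicate_append (k : ℕ) (u : List ℤ) :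
    upHorizCount (List.replicate k (-1) ++ u) = upHorizCount u := by
  induction k with
  | zero => simp
  | succ m ih =>
    rw [List.replicate_succ, List.cons_append, uhc_cons, ih]
    simp

/-- The grammar Finsets: `(pr n).1` = complete paths of weight `n`;
`(pr n).2 k` = valid suffixes from height `k+1` of weight `n` not starting with a down step. -/
def pr : ℕ → Finset (List ℤ) × (ℕ → Finset (List ℤ))
  | 0 => ({[]}, fun _ => ∅)
  | n + 1 =>
      ((pr n).1.image (List.cons 0) ∪ ((pr n).2 0).image (List.cons 1),
       fun k => ((pr n).1.image (fun v => 0 :: (List.replicate (k + 1) (-1) ++ v)))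
         ∪ ((pr n).2 k).image (List.cons 0) ∪ ((pr n).2 (k + 1)).image (List.cons 1))

lemma mem_pr : ∀ n : ℕ, (∀ v, v ∈ (pr n).1 ↔ Good 0 v ∧ upHorizCount v = n) ∧
    (∀ k v, v ∈ (pr n).2 k ↔ Good ((k : ℤ) + 1) v ∧ v.head? ≠ some (-1) ∧ upHorizCount v = n) := by
  intro n
  induction n with
  | zero =>
    constructor
    · intro v
      simp only [pr, Finset.mem_singleton]
      constructor
      · rintro rfl; exact ⟨rfl, rfl⟩
      · rintro ⟨hg, hc⟩
        cases v with
        | nil => rfl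
        | cons a w =>
          exfalso
          have ha := hg.1
          have ha' : a = -1 := by
            rcases ha with h | h | h
            · exfalso; rw [uhc_cons, h] at hc; simp at hc
            · exfalso; rw [uhc_cons, h] at hc; simp at hc
            · exact h
          exact good_zero_head _ hg (by simp [ha'])
    · intro k v
      simp only [pr, Finset.notMem_empty, false_iff]
      rintro ⟨hg, hh, hc⟩
      cases v with
      | nil => simp [Good] at hg; omega
      | cons a w =>
        obtain ⟨ha, -, -, -, -⟩ := hg
        have ha' : a = -1 := by
          rcases ha with h | h | h
          · exfalso; rw [uhc_cons, h] at hc; simp at hc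
          · exfalso; rw [uhc_cons, h] at hc; simp at hc
          · exact h
        exact hh (by simp [ha'])
  | succ n ih =>
    obtain ⟨ihP, ihR⟩ := ih
    constructor
    · intro v
      simp only [pr, Finset.mem_union, Finset.mem_image]
      constructor
      · rintro (⟨w, hw, rfl⟩ | ⟨w, hw, rfl⟩)
        · obtain ⟨hg, hc⟩ := (ihP w).mp hw
          refine ⟨⟨by simp, le_refl 0, by simp, by simp, by simpa using hg⟩, ?_⟩
          rw [uhc_cons]; simp [hc]; omega
        · obtain ⟨hg, hh, hc⟩ := (ihR 0 w).mp hw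
          refine ⟨⟨by simp, le_refl 0, by simp, by simp [hh], ?_⟩, ?_⟩
          · simpa using hg
          · rw [uhc_cons]; simp [hc]; omega
      · rintro ⟨hg, hc⟩
        have hhead := good_zero_head v hg
        cases v with
        | nil => simp [upHorizCount] at hc
        | cons a w =>
          obtain ⟨ha, -, -, hpk, hgw⟩ := hg
          rcases ha with rfl | rfl | rfl
          · -- up step
            right
            refine ⟨w, (ihR 0 w).mpr ⟨by simpa using hgw, ?_, ?_⟩, rfl⟩
            · intro hc'; exact hpk ⟨rfl, hc'⟩
            · rw [uhc_cons] at hc; simp at hc; omega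
          · -- horizontal step
            left
            refine ⟨w, (ihP w).mpr ⟨by simpa using hgw, ?_⟩, rfl⟩
            rw [uhc_cons] at hc; simp at hc; omega
          · exact absurd (by simp) hhead
    · intro k v
      simp only [pr, Finset.mem_union, Finset.mem_image]
      constructor
      · rintro ((⟨w, hw, rfl⟩ | ⟨w, hw, rfl⟩) | ⟨w, hw, rfl⟩)
        · obtain ⟨hg, hc⟩ := (ihP w).mp hw
          refine ⟨⟨by simp, by positivity, by simp, by simp, ?_⟩, by simp, ?_⟩
          · have he : ((k : ℤ) + 1) + 0 = (((k + 1 : ℕ)) : ℤ) := by push_cast; ring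
            rw [he]
            exact good_replicate (k + 1) w hg
          · rw [uhc_cons, uhc_replicate_append]; simp [hc]; omega
        · obtain ⟨hg, hh, hc⟩ := (ihR k w).mp hw
          refine ⟨⟨by simp, by positivity, by simp, by simp, by simpa using hg⟩, by simp, ?_⟩
          rw [uhc_cons]; simp [hc]; omega
        · obtain ⟨hg, hh, hc⟩ := (ihR (k + 1) w).mp hw
          refine ⟨⟨by simp, by positivity, by simp, by simp [hh], ?_⟩, by simp, ?_⟩
          · have he : ((k : ℤ) + 1) + 1 = (((k + 1 : ℕ)) : ℤ) + 1 := by push_cast; ring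
            rw [he]
            exact hg
          · rw [uhc_cons]; simp [hc]; omega
      · rintro ⟨hg, hh, hc⟩
        cases v with
        | nil => simp [Good] at hg; omega
        | cons a w =>
          obtain ⟨ha, -, -, hpk, hgw⟩ := hg
          rcases ha with rfl | rfl | rfl
          · -- up step: third branch
            right
            refine ⟨w, (ihR (k + 1) w).mpr ⟨?_, ?_, ?_⟩, rfl⟩
            · have he : ((k : ℤ) + 1) + 1 = (((k + 1 : ℕ)) : ℤ) + 1 := by push_cast; ring
              rwa [he] at hgw
            · intro hc'; exact hpk ⟨rfl, hc'⟩
            · rw [uhc_cons] at hc; simp at hc; omega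
          · -- horizontal step
            left
            have he : ((k : ℤ) + 1) + 0 = (k : ℤ) + 1 := by ring
            rw [he] at hgw
            by_cases hwh : w.head? = some (-1)
            · -- down run
              left
              obtain ⟨u, rfl, hgu⟩ := good_down k w hgw hwh
              refine ⟨u, (ihP u).mpr ⟨hgu, ?_⟩, rfl⟩
              rw [uhc_cons, uhc_replicate_append] at hc; simp at hc; omega
            · right
              refine ⟨w, (ihR k w).mpr ⟨hgw, hwh, ?_⟩, rfl⟩
              rw [uhc_cons] at hc; simp at hc; omega
          · exact absurd (by simp) hh

/-- Cardinality recursion: `p(n+1) = p(n) + r(n)`, `r(n+1) = p(n) + 2 r(n)`. -/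
def q : ℕ → ℕ × ℕ
  | 0 => (1, 0)
  | n + 1 => ((q n).1 + (q n).2, (q n).1 + 2 * (q n).2)

lemma card_pr (n : ℕ) : (pr n).1.card = (q n).1 ∧ ∀ k, ((pr n).2 k).card = (q n).2 := by
  induction n with
  | zero => simp [pr, q]
  | succ n ih =>
    obtain ⟨ihP, ihR⟩ := ih
    have hd01 : ∀ (s t : Finset (List ℤ)),
        Disjoint (s.image (List.cons (0 : ℤ))) (t.image (List.cons 1)) := by
      intro s t
      rw [Finset.disjoint_left]
      rintro x hx hx'
      obtain ⟨w, -, rfl⟩ := Finset.mem_image.mp hx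
      obtain ⟨w', -, he⟩ := Finset.mem_image.mp hx'
      simp at he
    constructor
    · show ((pr n).1.image (List.cons 0) ∪ ((pr n).2 0).image (List.cons 1)).card = _
      rw [Finset.card_union_of_disjoint (hd01 _ _),
        Finset.card_image_of_injective _ (List.cons_injective),
        Finset.card_image_of_injective _ (List.cons_injective), ihP, ihR 0]
      rfl
    · intro k
      show ((((pr n).1.image (fun v => 0 :: (List.replicate (k + 1) (-1) ++ v)))
         ∪ ((pr n).2 k).image (List.cons 0)) ∪ ((pr n).2 (k + 1)).image (List.cons 1)).card = _
      have hinj : Function.Injective (fun v : List ℤ => 0 :: (List.replicate (k + 1) (-1) ++ v)) := by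
        intro a b h
        simp only [List.cons.injEq, true_and] at h
        exact List.append_cancel_left h
      have hdAB : Disjoint ((pr n).1.image (fun v => 0 :: (List.replicate (k + 1) (-1) ++ v)))
          (((pr n).2 k).image (List.cons 0)) := by
        rw [Finset.disjoint_left]
        rintro x hx hx'
        obtain ⟨w, -, rfl⟩ := Finset.mem_image.mp hx
        obtain ⟨w', hw', he⟩ := Finset.mem_image.mp hx'
        have : w' = List.replicate (k + 1) (-1) ++ w := by
          simpa [eq_comm] using he
        have hh := ((mem_pr n).2 k w').mp hw'
        apply hh.2.1
        rw [this]
        simp [List.replicate_succ]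
      have hdC : Disjoint (((pr n).1.image (fun v => 0 :: (List.replicate (k + 1) (-1) ++ v)))
          ∪ ((pr n).2 k).image (List.cons 0)) (((pr n).2 (k + 1)).image (List.cons 1)) := by
        rw [Finset.disjoint_left]
        rintro x hx hx'
        obtain ⟨w', -, he⟩ := Finset.mem_image.mp hx'
        rcases Finset.mem_union.mp hx with h | h
        · obtain ⟨w, -, rfl⟩ := Finset.mem_image.mp h
          simp at he
        · obtain ⟨w, -, rfl⟩ := Finset.mem_image.mp h
          simp at he
      rw [Finset.card_union_of_disjoint hdC, Finset.card_union_of_disjoint hdAB,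
        Finset.card_image_of_injective _ hinj,
        Finset.card_image_of_injective _ (List.cons_injective),
        Finset.card_image_of_injective _ (List.cons_injective), ihP, ihR k, ihR (k + 1)]
      show _ = (q n).1 + 2 * (q n).2
      ring

lemma q_fib : ∀ m : ℕ, (q (m + 1)).1 = Nat.fib (2 * m + 1) ∧ (q (m + 1)).2 = Nat.fib (2 * m + 2) := by
  intro m
  induction m with
  | zero => simp [q]
  | succ m ih =>
    obtain ⟨h1, h2⟩ := ih
    have fa : Nat.fib (2 * m + 2) = Nat.fib (2 * m) + Nat.fib (2 * m + 1) := Nat.fib_add_two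
    have fb : Nat.fib (2 * m + 3) = Nat.fib (2 * m + 1) + Nat.fib (2 * m + 2) := by
      have e : 2 * m + 3 = (2 * m + 1) + 2 := by ring
      rw [e, Nat.fib_add_two]
    have fc : Nat.fib (2 * m + 4) = Nat.fib (2 * m + 2) + Nat.fib (2 * m + 3) := by
      have e : 2 * m + 4 = (2 * m + 2) + 2 := by ring
      have e2 : (2 * m + 2) + 1 = 2 * m + 3 := by ring
      calc Nat.fib (2 * m + 4) = Nat.fib ((2 * m + 2) + 2) := by rw [e]
        _ = Nat.fib (2 * m + 2) + Nat.fib ((2 * m + 2) + 1) := Nat.fib_add_two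
        _ = Nat.fib (2 * m + 2) + Nat.fib (2 * m + 3) := by rw [e2]
    constructor
    · show (q (m + 1)).1 + (q (m + 1)).2 = Nat.fib (2 * (m + 1) + 1)
      rw [h1, h2]
      have e : 2 * (m + 1) + 1 = 2 * m + 3 := by ring
      rw [e, fb]
    · show (q (m + 1)).1 + 2 * (q (m + 1)).2 = Nat.fib (2 * (m + 1) + 2)
      rw [h1, h2]
      have e : 2 * (m + 1) + 2 = 2 * m + 4 := by ring
      rw [e, fc, fb]
      ring

theorem motzkin_restricted_count (n : ℕ) (hn : 1 ≤ n) :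
    Nat.card {p : List ℤ // IsMotzkin p ∧ NoPeak p ∧ DownRunsReachBottom p ∧ upHorizCount p = n}
      = Nat.fib (2 * n - 1) := by
  have hiff : ∀ p : List ℤ,
      (IsMotzkin p ∧ NoPeak p ∧ DownRunsReachBottom p ∧ upHorizCount p = n) ↔ p ∈ (pr n).1 := by
    intro p
    rw [(mem_pr n).1 p, good_zero_iff]
    tauto
  rw [Nat.card_congr (Equiv.subtypeEquivRight hiff)]
  have hcard : Nat.card {p : List ℤ // p ∈ (pr n).1} = (pr n).1.card := by
    simp [Nat.card_eq_fintype_card]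
  rw [hcard]
  obtain ⟨m, rfl⟩ : ∃ m, n = m + 1 := ⟨n - 1, by omega⟩
  rw [(card_pr (m + 1)).1, (q_fib m).1]
  congr 1
end

section
/- For n ≥ 3, a permutation σ of size n has exactly one preimage under the PSB map if and only if σ(n) = n, the set of left-to-right maxima of σ equals {n-k, n-k+1, ..., n} for some k ≥ 0 (i.e., the left-to-right maxima are consecutive integers ending at n), and no two distinct left-to-right maxima occupy adjacent positions. -/
/-- Position `i` (0-indexed) holds a left-to-right maximum of `σ`. -/
def IsLTRMax (σ : List ℕ) (i : ℕ) : Prop :=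
  i < σ.length ∧ ∀ j < i, σ[j]! < σ[i]!


namespace PSBP

lemma psbAux_nil (s : List ℕ) : psbAux [] s = s := by cases s <;> rfl

lemma psbAux_perm : ∀ (l s : List ℕ), (psbAux l s).Perm (l ++ s) := by
  intro l
  induction l with
  | nil => intro s; rw [psbAux_nil]; simp
  | cons x xs ih =>
    intro s
    cases s with
    | nil =>
      show (psbAux xs [x]).Perm _
      refine (ih [x]).trans ?_
      simpa using List.perm_append_singleton x xs
    | cons t s' =>
      show (if x + 1 = t then psbAux xs (x :: t :: s')
        else if x + 1 < t then x :: psbAux xs (t :: s')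
        else (t :: s') ++ psbAux xs [x]).Perm _
      split_ifs with h1 h2
      · refine (ih _).trans ?_
        exact List.perm_middle
      · exact ((ih _).cons x)
      · refine (List.Perm.append_left _ (ih _)).trans ?_
        refine (List.perm_append_comm).trans ?_
        refine List.Perm.append_right _ ?_
        exact List.perm_append_singleton x xs

lemma psbAux_ne_nil (l : List ℕ) {s : List ℕ} (hs : s ≠ []) : psbAux l s ≠ [] := by
  intro h
  have := (psbAux_perm l s).length_eq
  rw [h] at this
  simp at this
  have : s.length = 0 := by omega
  exact hs (List.length_eq_zero_iff.mp this)

lemma psbAux_cons_range (x : ℕ) (xs : List ℕ) (u j : ℕ) (hj : 1 ≤ j) :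
    psbAux (x :: xs) (List.range' u j) =
      if x + 1 = u then psbAux xs (List.range' x (j+1))
      else if x + 1 < u then x :: psbAux xs (List.range' u j)
      else List.range' u j ++ psbAux xs [x] := by
  obtain ⟨j', rfl⟩ : ∃ j', j = j' + 1 := ⟨j - 1, by omega⟩
  rw [List.range'_succ]
  show (if x + 1 = u then psbAux xs (x :: u :: List.range' (u+1) j')
        else if x + 1 < u then _ else _) = _
  split_ifs with h1 h2
  · subst h1
    rw [List.range'_succ, List.range'_succ]
  · rfl
  · rfl

section
variable {α : Type*}

lemma le_foldr_max (l : List ℕ) (b : ℕ) : b ≤ l.foldr max b := by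
  induction l with
  | nil => simp
  | cons a l ih => simp only [List.foldr_cons]; exact ih.trans (le_max_right a _)

lemma foldr_max_absorb {y b : ℕ} (l : List ℕ) (h : y ≤ b) :
    max y (l.foldr max b) = l.foldr max b :=
  max_eq_right (h.trans (le_foldr_max l b))

lemma foldr_max_rebase {y b : ℕ} (l : List ℕ) (h : b ≤ y) :
    max y (l.foldr max b) = l.foldr max y := by
  induction l with
  | nil => simpa using h
  | cons a l ih => simp only [List.foldr_cons, max_left_comm y a, ih]

lemma getLast?_range' : ∀ (j u : ℕ), 1 ≤ j →
    (List.range' u j).getLast? = some (u + j - 1) := by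
  intro j
  induction j with
  | zero => omega
  | succ j' ih =>
    intro u _
    rw [List.range'_succ]
    rcases Nat.eq_zero_or_pos j' with h | h
    · subst h; simp
    · obtain ⟨k, rfl⟩ : ∃ k, j' = k + 1 := ⟨j' - 1, by omega⟩
      rw [List.range'_succ, List.getLast?_cons_cons, ← List.range'_succ]
      rw [ih (u+1) (by omega)]
      congr 1
      omega

lemma getLast?_cons_ne_nil {a : α} {l : List α} (h : l ≠ []) :
    (a :: l).getLast? = l.getLast? := by
  cases l with
  | nil => exact absurd rfl h
  | cons b l' => exact List.getLast?_cons_cons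

lemma getLast?_append_ne_nil {l l' : List α} (h : l' ≠ []) :
    (l ++ l').getLast? = l'.getLast? := by
  rw [List.getLast?_append]
  cases hl : l'.getLast? with
  | none => exact absurd (List.getLast?_eq_none_iff.mp hl) h
  | some a => rfl

end

lemma psb_last : ∀ (l : List ℕ) (u j : ℕ), 1 ≤ j → l.Nodup →
    (∀ x ∈ l, x < u ∨ u + j ≤ x) →
    (psbAux l (List.range' u j)).getLast? = some (l.foldr max (u + j - 1)) := by
  intro l
  induction l with
  | nil =>
    intro u j hj _ _
    rw [psbAux_nil, getLast?_range' j u hj]; rfl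
  | cons y ys ih =>
    intro u j hj hnd hmem
    rw [psbAux_cons_range y ys u j hj]
    have hynd : y ∉ ys := (List.nodup_cons.mp hnd).1
    have hnd' : ys.Nodup := (List.nodup_cons.mp hnd).2
    split_ifs with h1 h2
    · -- push
      have hy : y = u - 1 := by omega
      have := ih y (j+1) (by omega) hnd' ?_
      · rw [this]
        simp only [List.foldr_cons]
        rw [show y + (j+1) - 1 = u + j - 1 by omega]
        rw [foldr_max_absorb ys (by omega : y ≤ u + j - 1)]
      · intro x hx
        rcases hmem x (List.mem_cons_of_mem y hx) with h | h
        · left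
          have : x ≠ y := fun he => hynd (he ▸ hx)
          omega
        · right; omega
    · -- bypass
      have hne := psbAux_ne_nil ys (s := List.range' u j)
        (by intro hc; have := congrArg List.length hc; simp at this; omega)
      rw [getLast?_cons_ne_nil hne]
      rw [ih u j hj hnd' (fun x hx => hmem x (List.mem_cons_of_mem y hx))]
      simp only [List.foldr_cons]
      rw [foldr_max_absorb ys (by omega : y ≤ u + j - 1)]
    · -- pop
      have hyu : u + j ≤ y := by
        rcases hmem y (List.mem_cons_self) with h | h
        · omega
        · exact h
      rw [getLast?_append_ne_nil (psbAux_ne_nil ys (by simp) : psbAux ys [y] ≠ [])]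
      have : [y] = List.range' y 1 := by simp
      rw [this, ih y 1 le_rfl hnd' ?_]
      · simp only [List.foldr_cons]
        rw [show y + 1 - 1 = y by omega]
        rw [foldr_max_rebase ys (by omega : u + j - 1 ≤ y)]
      · intro x hx
        have : x ≠ y := fun he => hynd (he ▸ hx)
        rcases hmem x (List.mem_cons_of_mem y hx) with h | h <;> omega
lemma foldr_max_perm {l1 l2 : List ℕ} (h : l1.Perm l2) :
    l1.foldr max 0 = l2.foldr max 0 := by
  induction h with
  | nil => rfl
  | cons a _ ih => simp only [List.foldr_cons, ih]
  | swap a b l => simp only [List.foldr_cons, max_left_comm]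
  | trans _ _ ih1 ih2 => rw [ih1, ih2]

lemma foldr_max_le {l : List ℕ} {b : ℕ} (h : ∀ x ∈ l, x ≤ b) : l.foldr max 0 ≤ b := by
  induction l with
  | nil => simp
  | cons a l ih =>
    simp only [List.foldr_cons]
    exact max_le (h a (List.mem_cons_self)) (ih fun x hx => h x (List.mem_cons_of_mem a hx))

lemma mem_le_foldr {l : List ℕ} {x : ℕ} (h : x ∈ l) : x ≤ l.foldr max 0 := by
  induction l with
  | nil => simp at h
  | cons a l ih =>
    simp only [List.foldr_cons]
    rcases List.mem_cons.mp h with rfl | h'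
    · exact le_max_left _ _
    · exact (ih h').trans (le_max_right _ _)

lemma foldr_max_range (n : ℕ) (hn : 1 ≤ n) : (List.range' 1 n).foldr max 0 = n := by
  refine le_antisymm (foldr_max_le ?_) (mem_le_foldr ?_)
  · intro x hx; rw [List.mem_range'_1] at hx; omega
  · rw [List.mem_range'_1]; omega

lemma psb_getLast_of_perm {n : ℕ} {π : List ℕ} (hn : 1 ≤ n)
    (h : π.Perm (List.range' 1 n)) : (psb π).getLast? = some n := by
  have hlen : π.length = n := by simpa using h.length_eq
  have hnd : π.Nodup := h.nodup_iff.mpr (List.nodup_range' (s := 1) (n := n))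
  cases π with
  | nil => simp at hlen; omega
  | cons x xs =>
    have : psb (x :: xs) = psbAux xs [x] := rfl
    rw [this, show [x] = List.range' x 1 by simp]
    have hxnd := List.nodup_cons.mp hnd
    rw [psb_last xs x 1 le_rfl hxnd.2 ?_]
    · congr 1
      have h1 : xs.foldr max x = max x (xs.foldr max 0) := (foldr_max_rebase xs (by omega)).symm
      have h2 : (x :: xs).foldr max 0 = max x (xs.foldr max 0) := rfl
      rw [show x + 1 - 1 = x by omega, h1, ← h2, foldr_max_perm h, foldr_max_range n hn]
    · intro z hz
      have : z ≠ x := fun he => hxnd.1 (he ▸ hz)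
      omega
inductive Chain (B : ℕ) : ℕ → List ℕ → Prop
  | single (c : ℕ) (hc : B ≤ c) : Chain B c [c]
  | cons (c : ℕ) (C ρ : List ℕ) (hc : B ≤ c) (hC : C ≠ []) (hCb : ∀ f ∈ C, f < B)
      (h : Chain B (c+1) ρ) : Chain B c (c :: (C ++ ρ))

lemma Chain.le {B c : ℕ} {ρ : List ℕ} (h : Chain B c ρ) : B ≤ c := by
  cases h <;> assumption

lemma Chain.head {B c : ℕ} {ρ : List ℕ} (h : Chain B c ρ) : ∃ t, ρ = c :: t := by
  cases h <;> exact ⟨_, rfl⟩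

lemma split_small {B : ℕ} : ∀ (C : List ℕ), (∀ f ∈ C, f < B) → ∀ (z : ℕ), B ≤ z →
    ∀ (t : List ℕ), ((C ++ z :: t).takeWhile (· < B) = C) ∧
      ((C ++ z :: t).dropWhile (· < B) = z :: t) := by
  intro C
  induction C with
  | nil =>
    intro _ z hz t
    constructor
    · simp only [List.nil_append, List.takeWhile_cons]
      rw [decide_eq_false (by omega : ¬ z < B)]
      simp
    · simp only [List.nil_append, List.dropWhile_cons]
      rw [decide_eq_false (by omega : ¬ z < B)]
      simp
  | cons f C' ih =>
    intro hC z hz t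
    have hf : f < B := hC f (List.mem_cons_self)
    have ih' := ih (fun x hx => hC x (List.mem_cons_of_mem f hx)) z hz t
    constructor
    · simp only [List.cons_append, List.takeWhile_cons, decide_eq_true hf, ih'.1]
      simp
    · simp only [List.cons_append, List.dropWhile_cons, decide_eq_true hf, ih'.2]
      simp

def phi (B : ℕ) : List ℕ → List ℕ
  | [] => []
  | a :: t =>
    if (t.dropWhile (· < B)) = [] then []
    else (a+1) :: (t.takeWhile (· < B) ++ phi B (t.dropWhile (· < B)))
termination_by l => l.length
decreasing_by
  simp only [List.length_cons]
  have := (List.dropWhile_sublist (l := t) (fun x => decide (x < B))).length_le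
  omega

lemma phi_single (B c : ℕ) : phi B [c] = [] := by
  rw [phi]
  simp

lemma phi_cons {B c : ℕ} {C ρ' : List ℕ} (hC : ∀ f ∈ C, f < B)
    {z : ℕ} {t' : List ℕ} (hρ : ρ' = z :: t') (hz : B ≤ z) :
    phi B (c :: (C ++ ρ')) = (c+1) :: (C ++ phi B ρ') := by
  subst hρ
  obtain ⟨h1, h2⟩ := split_small C hC z hz t'
  rw [phi, h2, h1]
  simp

lemma psbAux_cons_single (x : ℕ) (xs : List ℕ) (t : ℕ) :
    psbAux (x :: xs) [t] = if x + 1 = t then psbAux xs [x, t]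
      else if x + 1 < t then x :: psbAux xs [t] else [t] ++ psbAux xs [x] := rfl

lemma chain_psb {B c : ℕ} {ρ : List ℕ} (h : Chain B c ρ) :
    ∀ E : List ℕ, (∀ f ∈ E, f + 1 < c) → psbAux (E ++ phi B ρ) [c] = E ++ ρ := by
  induction h with
  | single c hc =>
    intro E hE
    rw [phi_single, List.append_nil]
    induction E with
    | nil => rfl
    | cons f E' ihE =>
      have hf := hE f (List.mem_cons_self)
      rw [List.cons_append, psbAux_cons_single]
      rw [if_neg (by omega), if_pos (by omega)]
      rw [ihE (fun x hx => hE x (List.mem_cons_of_mem f hx))]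
  | cons c C ρ' hc hC hCb h ihc =>
    intro E hE
    obtain ⟨t', hρ'⟩ := h.head
    rw [phi_cons hCb hρ' (by omega : B ≤ c + 1)]
    induction E with
    | nil =>
      simp only [List.nil_append]
      rw [psbAux_cons_single, if_neg (by omega), if_neg (by omega)]
      rw [ihc C (fun f hf => by have := hCb f hf; omega)]
      simp
    | cons f E' ihE =>
      have hf := hE f (List.mem_cons_self)
      rw [List.cons_append, psbAux_cons_single]
      rw [if_neg (by omega), if_pos (by omega)]
      rw [ihE (fun x hx => hE x (List.mem_cons_of_mem f hx))]
      simp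
lemma flush_contra {B c : ℕ} {ρ E X : List ℕ} {u j : ℕ} (h : Chain B c ρ)
    (hE : E ≠ []) (hEp : ∀ e ∈ E, e < B ∧ e + 1 < c) (hj : 1 ≤ j)
    (heq : List.range' u j ++ X = E ++ ρ) : u + j - 1 < B := by
  set i := E.length with hi
  have hi1 : 1 ≤ i := by
    cases E with
    | nil => exact absurd rfl hE
    | cons a E' => simp [hi]
  rcases le_or_gt j i with hji | hij
  · -- flush inside E
    have h1 : (List.range' u j ++ X).take j = List.range' u j := by
      rw [List.take_append_of_le_length (by simp), List.take_of_length_le (by simp)]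
    have h2 : (E ++ ρ).take j = E.take j := List.take_append_of_le_length hji
    have h3 : List.range' u j = E.take j := by rw [← h1, heq, h2]
    have hmem : u + j - 1 ∈ List.range' u j := List.mem_range'_1.mpr ⟨by omega, by omega⟩
    rw [h3] at hmem
    exact (hEp _ (List.mem_of_mem_take hmem)).1
  · -- flush crosses into ρ : contradiction
    exfalso
    have hsplit : List.range' u i ++ List.range' (u + i) (j - i) = List.range' u j := by
      have := List.range'_append (s := u) (m := i) (n := j - i) (step := 1)
      simp only [one_mul] at this
      rw [this]
      congr 1
      omega
    rw [← hsplit, List.append_assoc] at heq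
    have hlen : (List.range' u i).length = E.length := by simp [hi]
    obtain ⟨hE2, hrest⟩ := List.append_inj heq hlen
    obtain ⟨t, ht⟩ := h.head
    have hji1 : 1 ≤ j - i := by omega
    have : List.range' (u + i) (j - i) ++ X = c :: t := by rw [← ht, hrest]
    obtain ⟨k, hk⟩ : ∃ k, j - i = k + 1 := ⟨j - i - 1, by omega⟩
    rw [hk, List.range'_succ] at this
    have huc : u + i = c := by
      have := congrArg List.head? this
      simpa using this
    have hmem : u + i - 1 ∈ E := by
      rw [← hE2]
      exact List.mem_range'_1.mpr ⟨by omega, by omega⟩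
    have := (hEp _ hmem).2
    omega

lemma psb_unique {B : ℕ} : ∀ (l : List ℕ) (u j c : ℕ) (E ρ : List ℕ),
    1 ≤ j → psbAux l (List.range' u j) = E ++ ρ → Chain B c ρ →
    (∀ e ∈ E, e < B ∧ e + 1 < c) →
    (l ++ List.range' u j).Perm (E ++ ρ) → (E ++ ρ).Nodup →
    (E ≠ [] → B ≤ u + j - 1) →
    j = 1 ∧ u = c ∧ l = E ++ phi B ρ := by
  intro l
  induction l with
  | nil =>
    intro u j c E ρ hj heq hch hEp hperm hnd hbot
    rw [psbAux_nil] at heq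
    cases E with
    | cons e E' =>
      exfalso
      have := flush_contra hch (by simp) hEp hj (by rw [List.append_nil, heq])
      have := hbot (by simp)
      omega
    | nil =>
      simp only [List.nil_append] at heq hperm hnd ⊢
      obtain ⟨t, ht⟩ := hch.head
      obtain ⟨k, hk⟩ : ∃ k, j = k + 1 := ⟨j - 1, by omega⟩
      rw [hk, List.range'_succ] at heq
      have huc : u = c := by
        have := congrArg List.head? heq; rw [ht] at this; simpa using this
      rcases Nat.eq_zero_or_pos k with hk0 | hk0
      · subst hk0
        have heq2 : [u] = ρ := by simpa using heq
        rw [← heq2] at ht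
        injection ht with ht1 ht2
        refine ⟨by omega, huc, ?_⟩
        rw [← heq2, phi_single]
      · exfalso
        cases hch with
        | single c hc =>
          have := congrArg List.length heq
          simp at this
          omega
        | cons c C ρ' hc hC hCb h' =>
          have htl : List.range' (u+1) k = C ++ ρ' := by
            have := congrArg List.tail heq
            simpa using this
          cases C with
          | nil => exact hC rfl
          | cons f C' =>
            have hf : f < B := hCb f (List.mem_cons_self)
            have huf : u + 1 = f := by
              obtain ⟨k', hk'⟩ : ∃ k', k = k' + 1 := ⟨k - 1, by omega⟩
              rw [hk', List.range'_succ] at htl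
              have := congrArg List.head? htl
              simpa using this
            omega
  | cons y ys ih =>
    intro u j c E ρ hj heq hch hEp hperm hnd hbot
    rw [psbAux_cons_range y ys u j hj] at heq
    have hndl : ((y :: ys) ++ List.range' u j).Nodup := hperm.nodup_iff.mpr hnd
    rw [List.nodup_append] at hndl
    obtain ⟨hnd1, hnd2, hdisj⟩ := hndl
    split_ifs at heq with h1 h2
    · -- push : contradiction via ih
      exfalso
      have hr : List.range' y (j + 1) = y :: List.range' u j := by
        rw [List.range'_succ, h1]
      have hperm' : (ys ++ List.range' y (j+1)).Perm (E ++ ρ) := by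
        rw [hr]
        refine (List.perm_middle).trans ?_
        exact hperm
      have := ih y (j+1) c E ρ (by omega) heq hch hEp hperm' hnd
        (fun hEne => by have := hbot hEne; omega)
      omega
    · -- bypass
      cases E with
      | cons e E' =>
        have hye : y = e := by
          have := congrArg List.head? heq; simpa using this
        have htl : psbAux ys (List.range' u j) = E' ++ ρ := by
          have := congrArg List.tail heq; simpa using this
        have hperm' : (ys ++ List.range' u j).Perm (E' ++ ρ) := by
          have h0 := hperm
          rw [← hye] at h0
          exact (List.perm_cons y).mp h0
        obtain ⟨hj1, huc, hys⟩ := ih u j c E' ρ hj htl hch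
          (fun x hx => hEp x (List.mem_cons_of_mem e hx)) hperm'
          (by rw [List.cons_append] at hnd; exact hnd.of_cons)
          (fun _ => hbot (by simp))
        exact ⟨hj1, huc, by rw [hye, List.cons_append, hys]⟩
      | nil =>
        exfalso
        simp only [List.nil_append] at heq hperm hnd
        obtain ⟨t, ht⟩ := hch.head
        have hyc : y = c := by
          have := congrArg List.head? heq; rw [ht] at this; simpa using this
        cases hch with
        | single c hc =>
          have : psbAux ys (List.range' u j) = [] := by
            have := congrArg List.tail heq; simpa using this
          exact psbAux_ne_nil ys (by
            intro hcon
            have := congrArg List.length hcon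
            simp at this
            omega) this
        | cons c C ρ' hc hC hCb h' =>
          have htl : psbAux ys (List.range' u j) = C ++ ρ' := by
            have := congrArg List.tail heq; simpa using this
          have hperm' : (ys ++ List.range' u j).Perm (C ++ ρ') := by
            have h0 := hperm
            rw [← hyc] at h0
            exact (List.perm_cons y).mp h0
          obtain ⟨hj1, huc, -⟩ := ih u j (c+1) C ρ' hj htl h'
            (fun f hf => ⟨hCb f hf, by have := hCb f hf; omega⟩) hperm' hnd.of_cons
            (fun _ => by omega)
          omega
    · -- pop
      have hyu : u < y := by
        have hymem : y ∉ List.range' u j := by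
          intro hcon
          exact hdisj y (List.mem_cons_self) y hcon rfl
        have : u ∈ List.range' u j := List.mem_range'_1.mpr ⟨le_rfl, by omega⟩
        rw [List.mem_range'_1] at hymem
        omega
      cases E with
      | cons e E' =>
        exfalso
        have := flush_contra hch (by simp) hEp hj heq
        have := hbot (by simp)
        omega
      | nil =>
        try simp only [List.nil_append] at heq
        try simp only [List.nil_append] at hperm
        try simp only [List.nil_append] at hnd
        try simp only [List.nil_append]
        obtain ⟨t, ht⟩ := hch.head
        obtain ⟨k, hk⟩ : ∃ k, j = k + 1 := ⟨j - 1, by omega⟩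
        rw [hk, List.range'_succ] at heq
        have huc : u = c := by
          have := congrArg List.head? heq; rw [ht] at this; simpa using this
        rcases Nat.eq_zero_or_pos k with hk0 | hk0
        · -- j = 1
          subst hk0
          have hru : List.range' u 1 = [u] := by simp
          rw [show List.range' (u+1) 0 = [] from rfl] at heq
          try simp only [List.cons_append, List.nil_append, List.singleton_append] at heq
          have htl : psbAux ys [y] = t := by
            have := congrArg List.tail heq; rw [ht] at this; simpa using this
          cases hch with
          | single c hc =>
            exfalso
            injection ht with ht1 ht2
            rw [← ht2] at htl
            exact psbAux_ne_nil ys (by simp) htl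
          | cons c C ρ' hc hC hCb h' =>
            have htt : t = C ++ ρ' := by
              have := congrArg List.tail ht; simpa using this.symm
            have hperm' : (ys ++ List.range' y 1).Perm (C ++ ρ') := by
              have h0 := hperm
              rw [ht, htt, hk] at h0
              simp only [Nat.zero_add] at h0
              rw [hru] at h0
              have h1 : ((y :: ys) ++ [u]).Perm (u :: y :: ys) :=
                List.perm_append_singleton u (y :: ys)
              have h2 : (u :: y :: ys).Perm (c :: (C ++ ρ')) := h1.symm.trans h0
              rw [huc] at h2
              have h3 : (y :: ys).Perm (C ++ ρ') := (List.perm_cons c).mp h2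
              rw [show List.range' y 1 = [y] by simp]
              exact (List.perm_append_singleton y ys).trans h3
            obtain ⟨-, hyc1, hysphi⟩ := ih y 1 (c+1) C ρ' le_rfl
              (by rw [show List.range' y 1 = [y] by simp, htl, htt])
              h' (fun f hf => ⟨hCb f hf, by have := hCb f hf; omega⟩) hperm'
              hnd.of_cons (fun _ => by omega)
            refine ⟨by omega, huc, ?_⟩
            obtain ⟨t', hρ'⟩ := h'.head
            rw [phi_cons hCb hρ' (by omega : B ≤ c + 1)]
            rw [hysphi, hyc1]
        · -- j ≥ 2 : contradiction
          exfalso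
          cases hch with
          | single c hc =>
            have hlen := congrArg List.length heq
            have hlaux := (psbAux_perm ys [y]).length_eq
            simp at hlen hlaux
            omega
          | cons c C ρ' hc hC hCb h' =>
            have htl : List.range' (u+1) k ++ psbAux ys [y] = C ++ ρ' := by
              have h0 := congrArg List.tail heq
              rw [ht] at h0
              have htt : t = C ++ ρ' := by
                have := congrArg List.tail ht; simpa using this.symm
              simpa [htt] using h0
            cases C with
            | nil => exact hC rfl
            | cons f C' =>
              have hf : f < B := hCb f (List.mem_cons_self)
              obtain ⟨k', hk'⟩ : ∃ k', k = k' + 1 := ⟨k - 1, by omega⟩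
              rw [hk', List.range'_succ] at htl
              have : u + 1 = f := by
                have := congrArg List.head? htl
                simpa using this
              omega
lemma mem_of_getLast?_some {l : List ℕ} {a : ℕ} (h : l.getLast? = some a) : a ∈ l := by
  obtain ⟨hne, rfl⟩ := List.mem_getLast?_eq_getLast (l := l) (x := a) h
  exact List.getLast_mem hne

lemma psbAux_bypass : ∀ (C : List ℕ) (l : List ℕ) (t : ℕ) (s : List ℕ),
    (∀ a ∈ C, a + 1 < t) → psbAux (C ++ l) (t :: s) = C ++ psbAux l (t :: s) := by
  intro C
  induction C with
  | nil => intro l t s _; simp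
  | cons a C' ih =>
    intro l t s hC
    have ha := hC a (List.mem_cons_self)
    show (if a + 1 = t then _ else if a + 1 < t then
      a :: psbAux (C' ++ l) (t :: s) else _) = _
    rw [if_neg (by omega), if_pos (by omega),
      ih l t s (fun x hx => hC x (List.mem_cons_of_mem a hx))]
    rfl

lemma takeWhile_split {p : ℕ → Bool} : ∀ (C : List ℕ), (∀ a ∈ C, p a = true) →
    ∀ (e : ℕ), p e = false → ∀ (t : List ℕ),
    (C ++ e :: t).takeWhile p = C ∧ (C ++ e :: t).dropWhile p = e :: t := by
  intro C
  induction C with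
  | nil =>
    intro _ e he t
    constructor
    · simp [List.takeWhile_cons, he]
    · simp [List.dropWhile_cons, he]
  | cons a C' ih =>
    intro hC e he t
    have ha := hC a (List.mem_cons_self)
    obtain ⟨h1, h2⟩ := ih (fun x hx => hC x (List.mem_cons_of_mem a hx)) e he t
    constructor
    · simp [List.takeWhile_cons, ha, h1]
    · simp [List.dropWhile_cons, ha, h2]

lemma dropWhile_mem_split {t : ℕ} : ∀ {D : List ℕ}, t ∈ D →
    D.dropWhile (· ≠ t) = t :: (D.dropWhile (· ≠ t)).tail := by
  intro D
  induction D with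
  | nil => intro h; simp at h
  | cons a D' ih =>
    intro h
    by_cases hat : a = t
    · subst hat
      simp [List.dropWhile_cons]
    · rw [List.dropWhile_cons, if_pos (by simp [hat])]
      rcases List.mem_cons.mp h with h' | h'
      · exact absurd h'.symm hat
      · exact ih h'

lemma find?_takeWhile {p : ℕ → Bool} : ∀ (l : List ℕ) (y : ℕ), l.find? p = some y →
    ∀ a ∈ l.takeWhile (· ≠ y), p a = false := by
  intro l
  induction l with
  | nil => intro y h; simp at h
  | cons b l' ih =>
    intro y h a ha
    cases hb : p b with
    | true =>
      simp only [List.find?_cons, hb] at h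
      have : y = b := by injection h with h'; exact h'.symm
      subst this
      rw [List.takeWhile_cons] at ha
      simp at ha
    | false =>
      simp only [List.find?_cons, hb] at h
      have hby : b ≠ y := by
        intro hc; subst hc
        rw [List.find?_some h] at hb
        simp at hb
      rw [List.takeWhile_cons, if_pos (by simp [hby])] at ha
      rcases List.mem_cons.mp ha with rfl | ha'
      · exact hb
      · exact ih y h a ha'

def psiF : ℕ → ℕ → List ℕ → List ℕ
  | 0, _, _ => []
  | (N+1), t, D =>
    match ((D.dropWhile (· ≠ t)).tail).find? (fun b => t < b) with
    | none => D.takeWhile (· ≠ t)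
    | some y => D.takeWhile (· ≠ t) ++ y :: psiF N y ((D.dropWhile (· ≠ t)).tail)

lemma psiF_correct : ∀ (N : ℕ) (D : List ℕ) (t : ℕ), D.length ≤ N + 1 → D.Nodup →
    t ∈ D → (∀ a ∈ D.takeWhile (· ≠ t), a + 1 < t) →
    (∃ M, D.getLast? = some M ∧ ∀ b ∈ D, b ≤ M) →
    psbAux (psiF (N+1) t D) [t] = D := by
  intro N
  induction N with
  | zero =>
    intro D t hlen hnd htD hpre hlm
    -- D = [t]
    have : D = [t] := by
      cases D with
      | nil => simp at htD
      | cons a D' =>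
        have hD' : D'.length = 0 := by
          have := hlen
          simp only [List.length_cons] at this
          omega
        have : D' = [] := List.length_eq_zero_iff.mp hD'
        subst this
        rcases List.mem_singleton.mp htD with rfl
        rfl
    subst this
    show psbAux (psiF 1 t [t]) [t] = [t]
    have h1 : ([t].dropWhile (· ≠ t)) = [t] := by simp
    have h2 : ([t].takeWhile (· ≠ t)) = [] := by simp
    show psbAux (match (([t].dropWhile (· ≠ t)).tail).find? (fun b => t < b) with
      | none => [t].takeWhile (· ≠ t)
      | some y => [t].takeWhile (· ≠ t) ++ y :: psiF 0 y (([t].dropWhile (· ≠ t)).tail)) [t] = [t]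
    rw [h1, h2]
    simp [psbAux_nil]
  | succ N ih =>
    intro D t hlen hnd htD hpre hlm
    set A := D.takeWhile (· ≠ t) with hA
    set Bq := (D.dropWhile (· ≠ t)).tail with hBq
    have hsplit : D = A ++ t :: Bq := by
      conv_lhs => rw [← List.takeWhile_append_dropWhile (p := (· ≠ t)) (l := D)]
      rw [← dropWhile_mem_split htD]
    have hBqsub : (t :: Bq).Sublist D := by
      rw [hsplit]; exact (List.sublist_append_right A _)
    have htBq : t ∉ Bq := by
      have := hBqsub.nodup hnd
      exact (List.nodup_cons.mp this).1
    have hBqD : Bq.Sublist D := ((List.tail_sublist _).trans (List.dropWhile_sublist _))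
    obtain ⟨M, hM1, hM2⟩ := hlm
    show psbAux (match Bq.find? (fun b => t < b) with
      | none => A
      | some y => A ++ y :: psiF (N+1) y Bq) [t] = D
    cases hfind : Bq.find? (fun b => t < b) with
    | none =>
      have hBqnil : Bq = [] := by
        by_contra hne
        have hlast : Bq.getLast? = some M := by
          rw [hsplit] at hM1
          rwa [getLast?_append_ne_nil (by simp), getLast?_cons_ne_nil hne] at hM1
        have hMBq : M ∈ Bq := mem_of_getLast?_some hlast
        have hMt : ¬ t < M := by
          have := List.find?_eq_none.mp hfind M hMBq
          simpa using this
        have h1 : t ≤ M := hM2 t htD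
        have h2 : M = t := by omega
        exact htBq (h2 ▸ hMBq)
      show psbAux A [t] = D
      have hb : psbAux A [t] = A ++ [t] := by
        have h0 := psbAux_bypass A [] t [] hpre
        rw [List.append_nil] at h0
        rw [h0, psbAux_nil]
      rw [hb, hsplit, hBqnil]
    | some y =>
      have hyBq : y ∈ Bq := List.mem_of_find?_eq_some hfind
      have hty : t < y := by simpa using List.find?_some hfind
      show psbAux (A ++ y :: psiF (N+1) y Bq) [t] = D
      rw [psbAux_bypass _ _ _ _ hpre]
      have hpop : psbAux (y :: psiF (N+1) y Bq) [t]
          = [t] ++ psbAux (psiF (N+1) y Bq) [y] := by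
        rw [psbAux_cons_single, if_neg (by omega), if_neg (by omega)]
      rw [hpop]
      have hBqne : Bq ≠ [] := fun hc => by simp [hc] at hyBq
      have ihy : psbAux (psiF (N+1) y Bq) [y] = Bq := by
        refine ih Bq y ?_ (hBqD.nodup hnd) hyBq ?_ ?_
        · have : A.length + 1 + Bq.length = D.length := by
            rw [hsplit]; simp; omega
          omega
        · intro a ha
          have h1 : ¬ t < a := by
            have := find?_takeWhile Bq y hfind a ha
            simpa using this
          have h2 : a ≠ t := by
            intro hc; subst hc
            exact htBq ((List.takeWhile_sublist _).mem ha)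
          omega
        · refine ⟨M, ?_, fun b hb => hM2 b (hBqD.mem hb)⟩
          rw [hsplit] at hM1
          rwa [getLast?_append_ne_nil (by simp), getLast?_cons_ne_nil hBqne] at hM1
      rw [ihy, hsplit]
      simp
lemma psbAux_cons_two (x : ℕ) (xs : List ℕ) (t s1 : ℕ) :
    psbAux (x :: xs) [t, s1] = if x + 1 = t then psbAux xs [x, t, s1]
      else if x + 1 < t then x :: psbAux xs [t, s1]
      else [t, s1] ++ psbAux xs [x] := rfl

lemma dropWhile_head_false {p : ℕ → Bool} : ∀ (l : List ℕ) (e : ℕ) (t : List ℕ),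
    l.dropWhile p = e :: t → p e = false := by
  intro l
  induction l with
  | nil => intro e t h; simp at h
  | cons a l' ih =>
    intro e t h
    rw [List.dropWhile_cons] at h
    by_cases ha : p a
    · rw [if_pos ha] at h
      exact ih e t h
    · rw [if_neg ha] at h
      injection h with h1 h2
      rw [← h1]
      simpa using ha

lemma psi_push (N c : ℕ) (Δ' : List ℕ) (hnd : ((c+1) :: Δ').Nodup)
    (hlen : Δ'.length ≤ N)
    (hlm : ∃ M, ((c+1) :: Δ').getLast? = some M ∧ ∀ b ∈ (c+1) :: Δ', b ≤ M)
    (hsm : ∀ a ∈ Δ', a ≠ c) :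
    psbAux (psiF (N+1) (c+1) ((c+1) :: Δ')) [c, c+1] = c :: (c+1) :: Δ' := by
  have hdw : (((c+1) :: Δ').dropWhile (· ≠ (c+1))) = (c+1) :: Δ' := by simp
  have htw : (((c+1) :: Δ').takeWhile (· ≠ (c+1))) = [] := by simp
  obtain ⟨M, hM1, hM2⟩ := hlm
  show psbAux (match ((((c+1) :: Δ').dropWhile (· ≠ (c+1))).tail).find? (fun b => (c+1) < b) with
    | none => ((c+1) :: Δ').takeWhile (· ≠ (c+1))
    | some y => ((c+1) :: Δ').takeWhile (· ≠ (c+1)) ++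
        y :: psiF N y ((((c+1) :: Δ').dropWhile (· ≠ (c+1))).tail)) [c, c+1] = c :: (c+1) :: Δ'
  rw [hdw, htw]
  simp only [List.tail_cons, List.nil_append]
  have hc1 : (c+1) ∉ Δ' := (List.nodup_cons.mp hnd).1
  cases hfind : Δ'.find? (fun b => (c+1) < b) with
  | none =>
    have hΔnil : Δ' = [] := by
      by_contra hne
      have hlast : Δ'.getLast? = some M := by
        rwa [getLast?_cons_ne_nil hne] at hM1
      have hMΔ : M ∈ Δ' := mem_of_getLast?_some hlast
      have h1 : ¬ (c+1) < M := by
        have := List.find?_eq_none.mp hfind M hMΔ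
        simpa using this
      have h2 : c + 1 ≤ M := hM2 (c+1) (List.mem_cons_self)
      have : M = c + 1 := by omega
      exact hc1 (this ▸ hMΔ)
    subst hΔnil
    rfl
  | some y =>
    have hyΔ : y ∈ Δ' := List.mem_of_find?_eq_some hfind
    have hty : c + 1 < y := by simpa using List.find?_some hfind
    have hΔne : Δ' ≠ [] := fun hc => by simp [hc] at hyΔ
    obtain ⟨N', hN'⟩ : ∃ N', N = N' + 1 := by
      cases Δ' with
      | nil => exact absurd rfl hΔne
      | cons a b => exact ⟨N - 1, by simp at hlen; omega⟩
    show psbAux (y :: psiF N y Δ') [c, c+1] = _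
    rw [psbAux_cons_two, if_neg (by omega), if_neg (by omega)]
    subst hN'
    have hpre : ∀ a ∈ Δ'.takeWhile (· ≠ y), a + 1 < y := by
      intro a ha
      have h1 : ¬ (c + 1) < a := by
        have := find?_takeWhile Δ' y hfind a ha
        simpa using this
      have h2 : a ≠ c + 1 := fun hc => hc1 (hc ▸ (List.takeWhile_sublist _).mem ha)
      have h3 : a ≠ c := hsm a ((List.takeWhile_sublist _).mem ha)
      omega
    have hlm' : ∃ M', Δ'.getLast? = some M' ∧ ∀ b ∈ Δ', b ≤ M' := by
      refine ⟨M, ?_, fun b hb => hM2 b (List.mem_cons_of_mem _ hb)⟩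
      rwa [getLast?_cons_ne_nil hΔne] at hM1
    rw [psiF_correct N' Δ' y (by omega) (hnd.of_cons) hyΔ hpre hlm']
    rfl

lemma two_or_chain {B : ℕ} : ∀ (N : ℕ) (Δ : List ℕ) (c : ℕ), Δ.length ≤ N →
    (c :: Δ).Nodup → B ≤ c → (∀ x ∈ Δ, x < B ∨ c < x) →
    (∃ M, (c :: Δ).getLast? = some M ∧ ∀ b ∈ c :: Δ, b ≤ M) →
    Chain B c (c :: Δ) ∨
    ∃ x1 r1 x2 r2, c ≤ x1 ∧ c ≤ x2 ∧ x1 :: r1 ≠ x2 :: r2 ∧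
      psbAux r1 [x1] = c :: Δ ∧ psbAux r2 [x2] = c :: Δ := by
  intro N
  induction N with
  | zero =>
    intro Δ c hlen _ hBc _ _
    have : Δ = [] := List.length_eq_zero_iff.mp (by omega)
    subst this
    exact Or.inl (Chain.single c hBc)
  | succ N ih =>
    intro Δ c hlen hnd hBc hmem hlm
    obtain ⟨M, hM1, hM2⟩ := hlm
    set C := Δ.takeWhile (· < B) with hC
    cases hrest : Δ.dropWhile (· < B) with
    | nil =>
      cases hΔ : Δ with
      | nil => exact Or.inl (Chain.single c hBc)
      | cons d Δ0 =>
        exfalso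
        have hΔC : Δ = C := by
          conv_lhs => rw [← List.takeWhile_append_dropWhile (p := (· < B)) (l := Δ)]
          rw [hrest, List.append_nil]
        have hΔne : Δ ≠ [] := by rw [hΔ]; simp
        have hlast : Δ.getLast? = some M := by
          rwa [getLast?_cons_ne_nil hΔne] at hM1
        have hMΔ : M ∈ Δ := mem_of_getLast?_some hlast
        have hMB : M < B := by
          have := List.mem_takeWhile_imp (hΔC ▸ hMΔ)
          simpa using this
        have : c ≤ M := hM2 c (List.mem_cons_self)
        omega
    | cons e Δ' =>
      have hΔsplit : Δ = C ++ e :: Δ' := by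
        conv_lhs => rw [← List.takeWhile_append_dropWhile (p := (· < B)) (l := Δ)]
        rw [hrest]
      have heB : ¬ e < B := by
        have := dropWhile_head_false Δ e Δ' hrest
        simpa using this
      have heΔ : e ∈ Δ := by rw [hΔsplit]; simp
      have hce : c < e := by rcases hmem e heΔ with h | h <;> omega
      have hΔne : Δ ≠ [] := by rw [hΔsplit]; simp
      have hlastΔ : Δ.getLast? = some M := by
        rwa [getLast?_cons_ne_nil hΔne] at hM1
      have hCB : ∀ a ∈ C, a < B := by
        intro a ha
        have := List.mem_takeWhile_imp (hC ▸ ha)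
        simpa using this
      have hndΔ : Δ.Nodup := hnd.of_cons
      have hcΔ : c ∉ Δ := (List.nodup_cons.mp hnd).1
      have hndeΔ' : (e :: Δ').Nodup := by
        have : (e :: Δ').Sublist Δ := by
          rw [hΔsplit]; exact List.sublist_append_right C _
        exact this.nodup hndΔ
      have heΔ' : e ∉ Δ' := (List.nodup_cons.mp hndeΔ').1
      have hlasteΔ' : (e :: Δ').getLast? = some M := by
        rw [hΔsplit] at hlastΔ
        rwa [getLast?_append_ne_nil (by simp)] at hlastΔ
      by_cases he1 : e = c + 1
      · by_cases hCnil : C = []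
        · -- ADJ defect : two preimages
          right
          rw [hCnil, List.nil_append] at hΔsplit
          have hW : psbAux (psiF (N+1) e Δ) [e] = Δ := by
            refine psiF_correct N Δ e hlen hndΔ heΔ ?_ ⟨M, hlastΔ, fun b hb => hM2 b (List.mem_cons_of_mem _ hb)⟩
            intro a ha
            rw [hΔsplit] at ha
            simp at ha
          refine ⟨c, e :: psiF (N+1) e Δ, e, c :: psiF (N+1) e Δ, le_rfl, by omega, ?_, ?_, ?_⟩
          · intro hcon
            injection hcon with h1 _
            omega
          · rw [psbAux_cons_single, if_neg (by omega), if_neg (by omega), hW]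
            rfl
          · -- push c onto stack [e]
            subst he1
            show psbAux (c :: psiF (N+1) (c+1) Δ) [c+1] = _
            rw [show psbAux (c :: psiF (N+1) (c+1) Δ) [c+1]
              = psbAux (psiF (N+1) (c+1) Δ) [c, c+1] from by
                rw [psbAux_cons_single]; rw [if_pos rfl]]
            rw [hΔsplit]
            rw [psi_push N c Δ' (hΔsplit ▸ hndΔ) (by rw [hΔsplit] at hlen; simp at hlen; omega)
              ⟨M, hΔsplit ▸ hlasteΔ', fun b hb => hM2 b (by rw [hΔsplit]; exact List.mem_cons_of_mem _ hb)⟩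
              (fun a ha => fun hc => hcΔ (hc ▸ (by rw [hΔsplit]; exact List.mem_cons_of_mem _ ha)))]
        · -- chain continues : lift ih
          have hlen' : Δ'.length ≤ N := by
            have h1 : Δ.length = C.length + (Δ'.length + 1) := by rw [hΔsplit]; simp
            have h2 : 0 < C.length := List.length_pos_iff.mpr hCnil
            omega
          have hmem' : ∀ x ∈ Δ', x < B ∨ e < x := by
            intro x hx
            have hxΔ : x ∈ Δ := by rw [hΔsplit]; simp [hx]
            have hxe : x ≠ e := fun hc => heΔ' (hc ▸ hx)
            rcases hmem x hxΔ with h | h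
            · exact Or.inl h
            · right; omega
          rcases ih Δ' e hlen' hndeΔ' (by omega) hmem'
            ⟨M, hlasteΔ', fun b hb => hM2 b (by rw [hΔsplit] at *; exact List.mem_cons_of_mem _ ((List.sublist_append_right C _).mem hb))⟩ with hch | htwo
          · left
            rw [hΔsplit, he1] at *
            exact Chain.cons c C _ hBc hCnil hCB (he1 ▸ hch)
          · right
            obtain ⟨x1', r1', x2', r2', hx1', hx2', hne', hp1', hp2'⟩ := htwo
            have hlift : ∀ x' r', e ≤ x' → psbAux r' [x'] = e :: Δ' →
                psbAux (x' :: C ++ r') [c] = c :: Δ := by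
              intro x' r' hx' hp'
              rw [List.cons_append, psbAux_cons_single,
                if_neg (by omega), if_neg (by omega),
                psbAux_bypass C r' x' [] (fun a ha => by have := hCB a ha; omega),
                hp', hΔsplit]
              rfl
            refine ⟨c, x1' :: C ++ r1', c, x2' :: C ++ r2', le_rfl, le_rfl, ?_,
              hlift x1' r1' hx1' hp1', hlift x2' r2' hx2' hp2'⟩
            intro hcon
            apply hne'
            injection hcon with h1 h2
            injection h2 with h3 h4
            rw [h3, List.append_cancel_left h4]
      · -- GAP defect : two preimages
        right
        have hce2 : c + 2 ≤ e := by omega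
        have hW : psbAux (psiF (N+1) e Δ) [e] = Δ := by
          refine psiF_correct N Δ e hlen hndΔ heΔ ?_ ⟨M, hlastΔ, fun b hb => hM2 b (List.mem_cons_of_mem _ hb)⟩
          intro a ha
          have htwq : Δ.takeWhile (· ≠ e) = C := by
            rw [hΔsplit]
            exact (takeWhile_split C (fun a ha => by
              have := hCB a ha; simp; omega) e (by simp) Δ').1
          rw [htwq] at ha
          have := hCB a ha
          omega
        refine ⟨c, e :: psiF (N+1) e Δ, e, c :: psiF (N+1) e Δ, le_rfl, by omega, ?_, ?_, ?_⟩
        · intro hcon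
          injection hcon with h1 _
          omega
        · rw [psbAux_cons_single, if_neg (by omega), if_neg (by omega), hW]
          rfl
        · rw [psbAux_cons_single, if_neg (by omega), if_pos (by omega), hW]
lemma pairwise_of_filter {p : ℕ → Bool} {R : ℕ → ℕ → Prop} :
    ∀ l : List ℕ, (l.filter p).Pairwise R →
      l.Pairwise (fun a b => p a = true → p b = true → R a b) := by
  intro l
  induction l with
  | nil => intro _; exact List.Pairwise.nil
  | cons a t ih =>
    intro h
    cases hpa : p a with
    | true =>
      rw [List.filter_cons_of_pos hpa] at h
      obtain ⟨hhead, htail⟩ := List.pairwise_cons.mp h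
      refine List.pairwise_cons.mpr ⟨?_, ih htail⟩
      intro b hb _ hpb
      exact hhead b (List.mem_filter.mpr ⟨hb, hpb⟩)
    | false =>
      rw [List.filter_cons_of_neg (by simp [hpa])] at h
      refine List.pairwise_cons.mpr ⟨?_, ih h⟩
      intro b _ hpa' _
      rw [hpa] at hpa'
      simp at hpa'

lemma chain_filter {B c : ℕ} {ρ : List ℕ} (h : Chain B c ρ) :
    ∃ m, 1 ≤ m ∧ ρ.filter (fun x => decide (B ≤ x)) = List.range' c m := by
  induction h with
  | single c hc =>
    exact ⟨1, le_rfl, by simp [hc]⟩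
  | cons c C ρ' hc hC hCb h ih =>
    obtain ⟨m, hm, hfil⟩ := ih
    refine ⟨m + 1, by omega, ?_⟩
    rw [List.filter_cons_of_pos (by simpa using hc), List.filter_append]
    have hCf : C.filter (fun x => decide (B ≤ x)) = [] := by
      rw [List.filter_eq_nil_iff]
      intro a ha
      have := hCb a ha
      simp
      omega
    rw [hCf, hfil, List.nil_append, List.range'_succ]

lemma chain_last {B c : ℕ} {ρ : List ℕ} (h : Chain B c ρ) :
    ∃ m, ρ.getLast? = some m ∧ c ≤ m ∧ ∀ x ∈ ρ, x ≤ m := by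
  induction h with
  | single c hc => exact ⟨c, by simp, le_rfl, by simp⟩
  | cons c C ρ' hc hC hCb h ih =>
    obtain ⟨m, hm1, hm2, hm3⟩ := ih
    obtain ⟨t, ht⟩ := h.head
    have hρ'ne : ρ' ≠ [] := by rw [ht]; simp
    refine ⟨m, ?_, by omega, ?_⟩
    · rw [getLast?_cons_ne_nil (by simp [hρ'ne] : C ++ ρ' ≠ []),
        getLast?_append_ne_nil hρ'ne, hm1]
    · intro x hx
      rcases List.mem_cons.mp hx with rfl | hx'
      · omega
      · rcases List.mem_append.mp hx' with h' | h'
        · have := hCb x h'; have := h.le; omega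
        · exact hm3 x h'

lemma chain'_smalls {B : ℕ} (c : ℕ) : ∀ C : List ℕ, (∀ f ∈ C, f < B) →
    List.IsChain (fun a b => B ≤ a → b < B) (c :: C) := by
  intro C
  induction C generalizing c with
  | nil => simp
  | cons f C' ih =>
    intro hC
    refine List.isChain_cons_cons.mpr ⟨fun _ => hC f (List.mem_cons_self), ?_⟩
    exact ih f (fun x hx => hC x (List.mem_cons_of_mem _ hx))

lemma chain_chain' {B c : ℕ} {ρ : List ℕ} (h : Chain B c ρ) :
    List.IsChain (fun a b => B ≤ a → b < B) ρ := by
  induction h with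
  | single c hc => simp
  | cons c C ρ' hc hC hCb h ih =>
    have : (c :: (C ++ ρ')) = (c :: C) ++ ρ' := by simp
    rw [this, List.isChain_append]
    refine ⟨chain'_smalls c C hCb, ih, ?_⟩
    intro x hx y _
    have hxC : x ∈ C := by
      cases C with
      | nil => exact absurd rfl hC
      | cons a C0 =>
        rw [getLast?_cons_ne_nil (by simp)] at hx
        exact mem_of_getLast?_some hx
    intro hBx
    have := hCb x hxC
    omega
lemma perm_mem_iff {n : ℕ} {σ : List ℕ} (hperm : σ.Perm (List.range' 1 n)) :
    ∀ v, v ∈ σ ↔ 1 ≤ v ∧ v ≤ n := by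
  intro v
  rw [hperm.mem_iff, List.mem_range'_1]
  omega

lemma chain_ltr_iff {B n : ℕ} {σ : List ℕ} (hperm : σ.Perm (List.range' 1 n))
    (hch : Chain B B σ) :
    ∀ i, i < σ.length → (IsLTRMax σ i ↔ B ≤ σ[i]!) := by
  have hnd : σ.Nodup := hperm.nodup_iff.mpr (List.nodup_range' (s := 1) (n := n))
  obtain ⟨tl, htl⟩ := hch.head
  have hσ0 : σ[0]! = B := by
    rw [htl]
    rw [getElem!_pos _ 0 (by simp)]
    rfl
  -- bigs appear in increasing order
  obtain ⟨m, hm1, hfil⟩ := chain_filter hch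
  have hpw : σ.Pairwise (fun a b =>
      decide (B ≤ a) = true → decide (B ≤ b) = true → a < b) := by
    apply pairwise_of_filter
    rw [hfil]
    exact List.pairwise_lt_range' (s := B) (n := m)
  have hpwidx := List.pairwise_iff_getElem.mp hpw
  intro i hi
  constructor
  · intro hltr
    by_contra hlt
    push_neg at hlt
    rcases Nat.eq_zero_or_pos i with rfl | hpos
    · omega
    · have := hltr.2 0 hpos
      omega
  · intro hBi
    refine ⟨hi, ?_⟩
    intro j hj
    by_cases hBj : B ≤ σ[j]!
    · have h := hpwidx j i (by omega) hi hj
      rw [getElem!_pos σ i hi] at hBi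
      rw [getElem!_pos σ j (by omega)] at hBj
      rw [getElem!_pos σ j (by omega), getElem!_pos σ i hi]
      exact h (by simpa using hBj) (by simpa using hBi)
    · push_neg at hBj
      omega

lemma chain_to_conds {B n : ℕ} {σ : List ℕ} (hn : 1 ≤ n)
    (hperm : σ.Perm (List.range' 1 n)) (hch : Chain B B σ) :
    (∃ k : ℕ, ∀ v : ℕ, (∃ i, IsLTRMax σ i ∧ σ[i]! = v) ↔ n - k ≤ v ∧ v ≤ n) ∧
    (∀ i j : ℕ, IsLTRMax σ i → IsLTRMax σ j → i < j → i + 1 < j) := by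
  have hnd : σ.Nodup := hperm.nodup_iff.mpr (List.nodup_range' (s := 1) (n := n))
  obtain ⟨tl, htl⟩ := hch.head
  have hBmem : B ∈ σ := by rw [htl]; exact List.mem_cons_self
  have hB1n : 1 ≤ B ∧ B ≤ n := (perm_mem_iff hperm B).mp hBmem
  have hmc := chain_ltr_iff hperm hch
  constructor
  · refine ⟨n - B, ?_⟩
    intro v
    have hnb : n - (n - B) = B := by omega
    rw [hnb]
    constructor
    · rintro ⟨i, hltr, rfl⟩
      have hi := hltr.1
      refine ⟨(hmc i hi).mp hltr, ?_⟩
      have : σ[i]! ∈ σ := by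
        rw [getElem!_pos σ i hi]
        exact List.getElem_mem hi
      exact ((perm_mem_iff hperm _).mp this).2
    · rintro ⟨h1, h2⟩
      have hvmem : v ∈ σ := (perm_mem_iff hperm v).mpr ⟨by omega, h2⟩
      obtain ⟨i, hi, hiv⟩ := List.mem_iff_getElem.mp hvmem
      refine ⟨i, (hmc i hi).mpr ?_, ?_⟩
      · rw [getElem!_pos σ i hi, hiv]; exact h1
      · rw [getElem!_pos σ i hi, hiv]
  · intro i j hi hj hij
    by_contra hcon
    have hji : j = i + 1 := by omega
    subst hji
    have hchain' := chain_chain' hch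
    have hjlen := hj.1
    have h := List.isChain_iff_getElem.mp hchain' i (by omega)
    have hBi := (hmc i (by omega)).mp hi
    have hBj := (hmc (i+1) hjlen).mp hj
    rw [getElem!_pos σ i (by omega)] at hBi
    rw [getElem!_pos σ (i+1) hjlen] at hBj
    have := h hBi
    omega

lemma chain_build {B n : ℕ} : ∀ (N : ℕ) (ρ : List ℕ) (c : ℕ), ρ.length ≤ N + 1 →
    ρ.Nodup → B ≤ c → c ≤ n →
    ρ.filter (fun x => decide (B ≤ x)) = List.range' c (n + 1 - c) →
    List.IsChain (fun a b => B ≤ a → b < B) ρ →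
    ρ.getLast? = some n → (∃ t, ρ = c :: t) →
    Chain B c ρ := by
  intro N
  induction N with
  | zero =>
    intro ρ c hlen hnd hBc hcn hfil hch' hlast ⟨t, ht⟩
    subst ht
    have : t = [] := by
      have hl : t.length + 1 ≤ 1 := by simpa using hlen
      exact List.length_eq_zero_iff.mp (by omega)
    subst this
    exact Chain.single c hBc
  | succ N ih =>
    intro ρ c hlen hnd hBc hcn hfil hch' hlast ⟨Δ, hΔ⟩
    subst hΔ
    set C := Δ.takeWhile (· < B) with hCdef
    have hCB : ∀ a ∈ C, a < B := by
      intro a ha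
      have := List.mem_takeWhile_imp (hCdef ▸ ha)
      simpa using this
    have hfilC : C.filter (fun x => decide (B ≤ x)) = [] := by
      rw [List.filter_eq_nil_iff]
      intro a ha
      have := hCB a ha
      simp; omega
    have hfilρ : (c :: Δ).filter (fun x => decide (B ≤ x))
        = c :: Δ.filter (fun x => decide (B ≤ x)) :=
      List.filter_cons_of_pos (by simpa using hBc)
    cases hrest : Δ.dropWhile (· < B) with
    | nil =>
      have hΔC : Δ = C := by
        conv_lhs => rw [← List.takeWhile_append_dropWhile (p := (· < B)) (l := Δ)]
        rw [hrest, List.append_nil]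
      have hfilΔ : Δ.filter (fun x => decide (B ≤ x)) = [] := by rw [hΔC]; exact hfilC
      have hcn' : c = n := by
        have := congrArg List.length (hfil.symm.trans (by rw [hfilρ, hfilΔ]))
        simp at this
        omega
      have hΔnil : Δ = [] := by
        cases hΔ2 : Δ with
        | nil => rfl
        | cons d Δ0 =>
          exfalso
          have hne : Δ ≠ [] := by rw [hΔ2]; simp
          have : Δ.getLast? = some n := by rwa [getLast?_cons_ne_nil hne] at hlast
          have hnΔ : n ∈ Δ := mem_of_getLast?_some this
          have : n < B := hCB n (hΔC ▸ hnΔ)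
          omega
      subst hΔnil
      subst hcn'
      exact Chain.single c hBc
    | cons e Δ' =>
      have hΔsplit : Δ = C ++ e :: Δ' := by
        conv_lhs => rw [← List.takeWhile_append_dropWhile (p := (· < B)) (l := Δ)]
        rw [hrest]
      have heB : B ≤ e := by
        have := dropWhile_head_false Δ e Δ' hrest
        simp at this
        omega
      have hfilΔ : Δ.filter (fun x => decide (B ≤ x))
          = e :: Δ'.filter (fun x => decide (B ≤ x)) := by
        rw [hΔsplit, List.filter_append, hfilC, List.nil_append,
          List.filter_cons_of_pos (by simpa using heB)]
      have hkey : c :: e :: Δ'.filter (fun x => decide (B ≤ x))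
          = List.range' c (n + 1 - c) := by
        rw [← hfilΔ, ← hfilρ, hfil]
      have hlen2 : 2 ≤ n + 1 - c := by
        have := congrArg List.length hkey
        simp at this
        omega
      obtain ⟨K, hK⟩ : ∃ K, n + 1 - c = K + 2 := ⟨n - 1 - c, by omega⟩
      rw [hK, List.range'_succ, List.range'_succ] at hkey
      have hec : e = c + 1 := by
        have := congrArg (fun l => l.tail.head?) hkey
        simpa using this
      have hfilΔ' : Δ'.filter (fun x => decide (B ≤ x)) = List.range' (c + 1 + 1) K := by
        have := congrArg (fun l => l.tail.tail) hkey
        simpa using this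
      -- C nonempty
      have hCne : C ≠ [] := by
        intro hCnil
        rw [hCnil, List.nil_append] at hΔsplit
        rw [hΔsplit] at hch'
        have := (List.isChain_cons_cons.mp hch').1 hBc
        omega
      -- apply ih
      have hchain : Chain B (c+1) (e :: Δ') := by
        refine ih (e :: Δ') (c+1) ?_ ?_ (by omega) (by omega) ?_ ?_ ?_ ⟨Δ', by rw [hec]⟩
        · have h1 : (c :: Δ).length = 1 + C.length + (1 + Δ'.length) := by
            rw [hΔsplit]; simp; omega
          have h2 : 0 < C.length := List.length_pos_iff.mpr hCne
          simp only [List.length_cons]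
          omega
        · have : (e :: Δ').Sublist (c :: Δ) := by
            rw [hΔsplit]
            exact (List.sublist_append_right C _).trans (List.sublist_cons_self _ _)
          exact this.nodup hnd
        · rw [List.filter_cons_of_pos (by simpa using heB), hfilΔ']
          rw [show n + 1 - (c + 1) = K + 1 by omega, List.range'_succ, hec]
        · have : (c :: Δ) = (c :: C) ++ (e :: Δ') := by rw [hΔsplit]; simp
          rw [this] at hch'
          exact (List.isChain_append.mp hch').2.1
        · have : (c :: Δ) = (c :: C) ++ (e :: Δ') := by rw [hΔsplit]; simp
          rw [this] at hlast
          rwa [getLast?_append_ne_nil (by simp)] at hlast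
      rw [hΔsplit]
      exact Chain.cons c C (e :: Δ') hBc hCne hCB (hec ▸ hchain)
lemma conds_to_chain {n : ℕ} {σ : List ℕ} (hn : 3 ≤ n)
    (hperm : σ.Perm (List.range' 1 n))
    (h1 : σ.getLast? = some n)
    (h2 : ∃ k : ℕ, ∀ v : ℕ, (∃ i, IsLTRMax σ i ∧ σ[i]! = v) ↔ n - k ≤ v ∧ v ≤ n)
    (h3 : ∀ i j : ℕ, IsLTRMax σ i → IsLTRMax σ j → i < j → i + 1 < j) :
    Chain (σ[0]!) (σ[0]!) σ := by
  have hlen : σ.length = n := by simpa using hperm.length_eq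
  have hnd : σ.Nodup := hperm.nodup_iff.mpr (List.nodup_range' (s := 1) (n := n))
  set B := σ[0]! with hBdef
  have hlen0 : 0 < σ.length := by omega
  have hLTR0 : IsLTRMax σ 0 := ⟨hlen0, fun j hj => absurd hj (Nat.not_lt_zero j)⟩
  obtain ⟨k, hk⟩ := h2
  have hB : n - k ≤ B ∧ B ≤ n := (hk B).mp ⟨0, hLTR0, rfl⟩
  have hBmem : B ∈ σ := by
    rw [hBdef, getElem!_pos σ 0 hlen0]
    exact List.getElem_mem hlen0
  have hB1 : 1 ≤ B := ((perm_mem_iff hperm B).mp hBmem).1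
  have claimA : ∀ i, i < σ.length → (IsLTRMax σ i ↔ B ≤ σ[i]!) := by
    intro i hi
    constructor
    · intro hltr
      rcases Nat.eq_zero_or_pos i with rfl | hpos
      · exact le_rfl
      · have := hltr.2 0 hpos
        omega
    · intro hBi
      have hvn : σ[i]! ≤ n := by
        have : σ[i]! ∈ σ := by
          rw [getElem!_pos σ i hi]; exact List.getElem_mem hi
        exact ((perm_mem_iff hperm _).mp this).2
      obtain ⟨i', hltr', hv'⟩ := (hk (σ[i]!)).mpr ⟨by omega, hvn⟩
      have hi' : i' < σ.length := hltr'.1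
      have : i' = i := by
        rw [getElem!_pos σ i hi, getElem!_pos σ i' hi'] at hv'
        exact (hnd.getElem_inj_iff).mp hv'
      exact this ▸ hltr'
  -- bigs sorted
  have hpwσ : σ.Pairwise (fun a b =>
      decide (B ≤ a) = true → decide (B ≤ b) = true → a < b) := by
    rw [List.pairwise_iff_getElem]
    intro i j hi hj hij hbi hbj
    have hLj : IsLTRMax σ j := (claimA j hj).mpr
      (by rw [getElem!_pos σ j hj]; simpa using hbj)
    have := hLj.2 i hij
    rw [getElem!_pos σ i hi, getElem!_pos σ j hj] at this
    exact this
  have hfilsorted : (σ.filter (fun x => decide (B ≤ x))).Pairwise (· < ·) := by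
    have h0 := hpwσ.sublist (List.filter_sublist (p := fun x => decide (B ≤ x)) (l := σ))
    refine h0.imp_of_mem ?_
    intro a b ha hb hab
    exact hab (List.mem_filter.mp ha).2 (List.mem_filter.mp hb).2
  have hfil : σ.filter (fun x => decide (B ≤ x)) = List.range' B (n + 1 - B) := by
    have hndf : (σ.filter (fun x => decide (B ≤ x))).Nodup := hnd.filter _
    have hndr : (List.range' B (n + 1 - B)).Nodup := List.nodup_range' (s := B) (n := n + 1 - B)
    have hpm : (σ.filter (fun x => decide (B ≤ x))).Perm (List.range' B (n + 1 - B)) := by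
      rw [List.perm_ext_iff_of_nodup hndf hndr]
      intro v
      rw [List.mem_filter, List.mem_range'_1, perm_mem_iff hperm]
      constructor
      · rintro ⟨⟨hv1, hv2⟩, hv3⟩
        simp at hv3
        omega
      · rintro ⟨hv1, hv2⟩
        refine ⟨⟨by omega, by omega⟩, by simp; omega⟩
    exact List.Perm.eq_of_pairwise (fun a b _ _ h1 h2 => absurd (h1.trans h2) (lt_irrefl a)) hfilsorted (List.pairwise_lt_range' (s := B) (n := n + 1 - B)) hpm
  -- no adjacent bigs
  have hch' : List.IsChain (fun a b => B ≤ a → b < B) σ := by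
    rw [List.isChain_iff_getElem]
    intro i hilen
    intro hBi
    by_contra hcon
    push_neg at hcon
    have hL1 : IsLTRMax σ i := (claimA i (by omega)).mpr
      (by rw [getElem!_pos σ i (by omega)]; exact hBi)
    have hL2 : IsLTRMax σ (i+1) := (claimA (i+1) (by omega)).mpr
      (by rw [getElem!_pos σ (i+1) (by omega)]; exact hcon)
    have := h3 i (i+1) hL1 hL2 (by omega)
    omega
  -- head
  have hhead : ∃ t, σ = B :: t := by
    cases hσ : σ with
    | nil => rw [hσ] at hlen0; simp at hlen0
    | cons s0 rest =>
      refine ⟨rest, ?_⟩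
      rw [hBdef, hσ]
      congr 1
  exact chain_build σ.length σ B (by omega) hnd le_rfl (by omega) hfil hch' h1 hhead
lemma psb_cons (x : ℕ) (xs : List ℕ) : psb (x :: xs) = psbAux xs [x] := rfl

theorem main_thm (n : ℕ) (hn : 3 ≤ n) (σ : List ℕ)
    (hσ : IsPermList n σ) :
    Nat.card {π : List ℕ // IsPermList n π ∧ psb π = σ} = 1 ↔
      σ.getLast? = some n ∧
      (∃ k : ℕ, ∀ v : ℕ, (∃ i, IsLTRMax σ i ∧ σ[i]! = v) ↔ n - k ≤ v ∧ v ≤ n) ∧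
      (∀ i j : ℕ, IsLTRMax σ i → IsLTRMax σ j → i < j → i + 1 < j) := by
  have hperm : σ.Perm (List.range' 1 n) := hσ
  have hlen : σ.length = n := by simpa using hperm.length_eq
  have hnd : σ.Nodup := hperm.nodup_iff.mpr (List.nodup_range' (s := 1) (n := n))
  have hlen0 : 0 < σ.length := by omega
  have hhead : ∃ t, σ = σ[0]! :: t := by
    cases hσ2 : σ with
    | nil => rw [hσ2] at hlen0; simp at hlen0
    | cons s0 rest =>
      refine ⟨rest, ?_⟩
      congr 1
  constructor
  · -- card = 1 → conditions
    intro hcard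
    obtain ⟨hsub, hne⟩ := Nat.card_eq_one_iff_unique.mp hcard
    obtain ⟨⟨π0, hπ0p, hπ0s⟩⟩ := hne
    have h1 : σ.getLast? = some n := by
      rw [← hπ0s]
      exact psb_getLast_of_perm (by omega) hπ0p
    set B := σ[0]! with hBdef
    obtain ⟨Δ, hΔ⟩ := hhead
    have hch : Chain B B σ := by
      have hmemΔ : ∀ x ∈ Δ, x < B ∨ B < x := by
        intro x hx
        have : x ≠ B := by
          intro hc
          subst hc
          have := hΔ ▸ hnd
          exact (List.nodup_cons.mp this).1 hx
        omega
      have hlm : ∃ M, (B :: Δ).getLast? = some M ∧ ∀ b ∈ B :: Δ, b ≤ M := by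
        refine ⟨n, by rw [← hΔ]; exact h1, ?_⟩
        intro b hb
        exact ((perm_mem_iff hperm b).mp (hΔ ▸ hb)).2
      rcases two_or_chain (B := B) Δ.length Δ B le_rfl (hΔ ▸ hnd) le_rfl hmemΔ hlm
        with h | htwo
      · rw [hΔ]; exact h
      · exfalso
        obtain ⟨x1, r1, x2, r2, _, _, hne12, hp1, hp2⟩ := htwo
        have mk : ∀ x r, psbAux r [x] = B :: Δ →
            IsPermList n (x :: r) ∧ psb (x :: r) = σ := by
          intro x r hp
          have hp' : psbAux r [x] = σ := by rw [hp, ← hΔ]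
          refine ⟨?_, by rw [psb_cons, hp']⟩
          have hpm := psbAux_perm r [x]
          rw [hp'] at hpm
          exact ((List.perm_append_singleton x r).symm.trans hpm.symm).trans hperm
        obtain ⟨hq1, hq2⟩ := mk x1 r1 hp1
        obtain ⟨hq3, hq4⟩ := mk x2 r2 hp2
        have heq := hsub.elim (⟨x1 :: r1, hq1, hq2⟩ :
            {π : List ℕ // IsPermList n π ∧ psb π = σ}) ⟨x2 :: r2, hq3, hq4⟩
        exact hne12 (congrArg Subtype.val heq)
    have conds := chain_to_conds (by omega : 1 ≤ n) hperm hch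
    exact ⟨h1, conds.1, conds.2⟩
  · -- conditions → card = 1
    rintro ⟨h1, h2, h3⟩
    have hch := conds_to_chain hn hperm h1 h2 h3
    set B := σ[0]! with hBdef
    have hex : psb (B :: phi B σ) = σ := by
      rw [psb_cons]
      have := chain_psb hch [] (fun f hf => absurd hf List.not_mem_nil)
      simpa using this
    have hexperm : IsPermList n (B :: phi B σ) := by
      have hpm := psbAux_perm (phi B σ) [B]
      rw [show psbAux (phi B σ) [B] = σ from hex] at hpm
      exact ((List.perm_append_singleton B (phi B σ)).symm.trans hpm.symm).trans hperm
    have key : ∀ π, IsPermList n π → psb π = σ → π = B :: phi B σ := by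
      intro π hp hs
      cases π with
      | nil =>
        exfalso
        have : σ = [] := by rw [← hs]; rfl
        rw [this] at hlen0
        simp at hlen0
      | cons x xs =>
        rw [psb_cons] at hs
        have heq : psbAux xs (List.range' x 1) = [] ++ σ := by
          rw [show List.range' x 1 = [x] by simp, List.nil_append]
          exact hs
        have hpm : (xs ++ List.range' x 1).Perm ([] ++ σ) := by
          rw [show List.range' x 1 = [x] by simp, List.nil_append]
          have hxp : (x :: xs).Perm σ := hp.trans hperm.symm
          exact (List.perm_append_singleton x xs).trans hxp
        obtain ⟨-, hxB, hxs⟩ := psb_unique (B := B) xs x 1 B [] σ le_rfl heq hch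
          (fun e he => absurd he List.not_mem_nil) hpm (by simpa using hnd)
          (fun hc => absurd rfl hc)
        rw [hxB, hxs, List.nil_append]
    rw [Nat.card_eq_one_iff_unique]
    refine ⟨⟨?_⟩, ⟨⟨B :: phi B σ, hexperm, hex⟩⟩⟩
    rintro ⟨πa, hpa, hsa⟩ ⟨πb, hpb, hsb⟩
    apply Subtype.ext
    show πa = πb
    rw [key πa hpa hsa, key πb hpb hsb]

end PSBP

theorem psb_one_preimage_characterization (n : ℕ) (hn : 3 ≤ n) (σ : List ℕ)
    (hσ : IsPermList n σ) :
    Nat.card {π : List ℕ // IsPermList n π ∧ psb π = σ} = 1 ↔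
      σ.getLast? = some n ∧
      (∃ k : ℕ, ∀ v : ℕ, (∃ i, IsLTRMax σ i ∧ σ[i]! = v) ↔ n - k ≤ v ∧ v ≤ n) ∧
      (∀ i j : ℕ, IsLTRMax σ i → IsLTRMax σ j → i < j → i + 1 < j) := PSBP.main_thm n hn σ hσ
end

section
/- A permutation π of size n satisfies PSB(π) = id_n (the identity permutation) if and only if π avoids both patterns 231 and 4213. -/
/-! ### Auxiliary machinery -/

/-- Running PSB, returning the pair (output so far, current stack). -/
def runPSB : List ℕ → List ℕ → List ℕ × List ℕ
  | [], s => ([], s)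
  | x :: xs, [] => runPSB xs [x]
  | x :: xs, t :: s =>
      if x + 1 = t then runPSB xs (x :: t :: s)
      else if x + 1 < t then (x :: (runPSB xs (t :: s)).1, (runPSB xs (t :: s)).2)
      else ((t :: s) ++ (runPSB xs [x]).1, (runPSB xs [x]).2)

lemma psbAux_eq_runPSB (xs : List ℕ) : ∀ s, psbAux xs s = (runPSB xs s).1 ++ (runPSB xs s).2 := by
  induction xs with
  | nil => intro s; simp [psbAux, runPSB]
  | cons x xs ih =>
    intro s
    cases s with
    | nil => simp [psbAux, runPSB, ih]
    | cons t s =>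
      by_cases h1 : x + 1 = t
      · simp [psbAux, runPSB, h1, ih]
      · by_cases h2 : x + 1 < t <;> simp [psbAux, runPSB, h1, h2, ih]

lemma runPSB_append (xs ys : List ℕ) : ∀ s, runPSB (xs ++ ys) s =
    ((runPSB xs s).1 ++ (runPSB ys (runPSB xs s).2).1, (runPSB ys (runPSB xs s).2).2) := by
  induction xs with
  | nil => intro s; simp [runPSB]
  | cons x xs ih =>
    intro s
    cases s with
    | nil => simp [runPSB, ih]
    | cons t s =>
      by_cases h1 : x + 1 = t
      · simp [runPSB, h1, ih]
      · by_cases h2 : x + 1 < t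
        · simp [runPSB, h1, h2, ih]
        · simp [runPSB, h1, h2, ih]

lemma runPSB_perm (xs : List ℕ) : ∀ s, ((runPSB xs s).1 ++ (runPSB xs s).2).Perm (xs ++ s) := by
  induction xs with
  | nil => intro s; simp [runPSB]
  | cons x xs ih =>
    intro s
    cases s with
    | nil =>
      simp only [runPSB]
      refine (ih [x]).trans ?_
      simpa using List.perm_append_singleton x xs
    | cons t s =>
      by_cases h1 : x + 1 = t
      · simp only [runPSB, if_pos h1]
        exact (ih (x :: t :: s)).trans List.perm_middle
      · by_cases h2 : x + 1 < t
        · simp only [runPSB, if_neg h1, if_pos h2]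
          exact (ih (t :: s)).cons x
        · simp only [runPSB, if_neg h1, if_neg h2, List.append_assoc]
          refine ((ih [x]).append_left (t :: s)).trans ?_
          refine List.perm_append_comm.trans ?_
          exact (List.perm_append_singleton x xs).append_right (t :: s)

/-- A valid stack is a consecutive increasing run (top-first). -/
def ValidStack (s : List ℕ) : Prop := ∃ t, s = List.range' t s.length

lemma validStack_nil : ValidStack [] := ⟨0, rfl⟩

lemma validStack_single (x : ℕ) : ValidStack [x] := ⟨x, rfl⟩

lemma validStack_cons {t : ℕ} {s : List ℕ} (h : ValidStack (t :: s)) :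
    t :: s = List.range' t (s.length + 1) := by
  obtain ⟨t', ht⟩ := h
  simp only [List.length_cons] at ht
  rw [List.range'_succ] at ht
  obtain ⟨rfl, hs⟩ := List.cons.injEq .. ▸ ht
  rw [ht]
  rfl

lemma le_of_mem_validStack {t a : ℕ} {s : List ℕ} (h : ValidStack (t :: s)) (ha : a ∈ t :: s) :
    t ≤ a := by
  have := validStack_cons h
  rw [this] at ha
  exact (List.mem_range'_1.mp ha).1

lemma validStack_push {x t : ℕ} {s : List ℕ} (h : ValidStack (t :: s)) (hx : x + 1 = t) :
    ValidStack (x :: t :: s) := by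
  refine ⟨x, ?_⟩
  have := validStack_cons h
  simp only [List.length_cons]
  rw [List.range'_succ, hx, ← this]

lemma runPSB_valid (xs : List ℕ) : ∀ s, ValidStack s → ValidStack (runPSB xs s).2 := by
  induction xs with
  | nil => intro s hs; simpa [runPSB] using hs
  | cons x xs ih =>
    intro s hs
    cases s with
    | nil => simpa [runPSB] using ih [x] (validStack_single x)
    | cons t s =>
      by_cases h1 : x + 1 = t
      · simpa [runPSB, h1] using ih (x :: t :: s) (validStack_push hs h1)
      · by_cases h2 : x + 1 < t
        · simpa [runPSB, h1, h2] using ih (t :: s) hs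
        · simpa [runPSB, h1, h2] using ih [x] (validStack_single x)

/-- Key lemma: an element in the stack smaller than a later input `b` ends up in
the output by the time `b` has been processed. -/
lemma mem_out_of_mem_stack {a b : ℕ} (hab : a < b) :
    ∀ (v s : List ℕ), ValidStack s → a ∈ s → a ∈ (runPSB (v ++ [b]) s).1 := by
  intro v
  induction v with
  | nil =>
    intro s hv ha
    cases s with
    | nil => simp at ha
    | cons t s' =>
      have ht : t ≤ a := le_of_mem_validStack hv ha
      have h1 : ¬ (b + 1 = t) := by omega
      have h2 : ¬ (b + 1 < t) := by omega
      simp only [List.nil_append, runPSB, if_neg h1, if_neg h2]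
      exact List.mem_append_left _ ha
  | cons x v ih =>
    intro s hv ha
    cases s with
    | nil => simp at ha
    | cons t s' =>
      by_cases h1 : x + 1 = t
      · simpa [runPSB, h1] using
          ih (x :: t :: s') (validStack_push hv h1) (List.mem_cons_of_mem _ ha)
      · by_cases h2 : x + 1 < t
        · simp only [List.cons_append, runPSB, if_neg h1, if_pos h2]
          exact List.mem_cons_of_mem _ (ih (t :: s') hv ha)
        · simp only [List.cons_append, runPSB, if_neg h1, if_neg h2]
          exact List.mem_append_left _ ha

/-- Variant: an element at the head of the input followed later by a larger `b`
ends up in the output by the time `b` has been processed. -/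
lemma head_mem_out {a b : ℕ} (hab : a < b) (v s : List ℕ) (hv : ValidStack s) :
    a ∈ (runPSB (a :: (v ++ [b])) s).1 := by
  cases s with
  | nil =>
    simp only [runPSB]
    exact mem_out_of_mem_stack hab v [a] (validStack_single a) (List.mem_singleton_self a)
  | cons t s' =>
    by_cases h1 : a + 1 = t
    · simp only [runPSB, if_pos h1]
      exact mem_out_of_mem_stack hab v (a :: t :: s') (validStack_push hv h1)
        (List.mem_cons_self)
    · by_cases h2 : a + 1 < t
      · simp only [runPSB, if_neg h1, if_pos h2]
        exact List.mem_cons_self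
      · simp only [runPSB, if_neg h1, if_neg h2]
        exact List.mem_append_right _
          (mem_out_of_mem_stack hab v [a] (validStack_single a) (List.mem_singleton_self a))

/-! ### Pattern lemmas -/

lemma contains_231 {l : List ℕ} {a b c : ℕ} (h : ([a, b, c]).Sublist l)
    (h1 : c < a) (h2 : a < b) : Contains l [2, 3, 1] := by
  refine ⟨[a, b, c], h, rfl, ?_⟩
  intro i j hi hj
  simp only [List.length_cons, List.length_nil] at hi hj
  interval_cases i <;> interval_cases j <;> simp <;> omega

lemma contains_4213 {l : List ℕ} {a b c d : ℕ} (h : ([d, b, a, c]).Sublist l)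
    (hab : a < b) (hbc : b < c) (hcd : c < d) : Contains l [4, 2, 1, 3] := by
  refine ⟨[d, b, a, c], h, rfl, ?_⟩
  intro i j hi hj
  simp only [List.length_cons, List.length_nil] at hi hj
  interval_cases i <;> interval_cases j <;> simp <;> omega

lemma of_contains_231 {l : List ℕ} (h : Contains l [2, 3, 1]) :
    ∃ a b c : ℕ, ([a, b, c]).Sublist l ∧ c < a ∧ a < b := by
  obtain ⟨τ, hsub, hlen, hiso⟩ := h
  simp only [List.length_cons, List.length_nil] at hlen
  obtain ⟨a, b, c, rfl⟩ := List.length_eq_three.mp hlen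
  refine ⟨a, b, c, hsub, ?_, ?_⟩
  · have := (hiso 2 0 (by simp) (by simp)).mpr (by simp)
    simpa using this
  · have := (hiso 0 1 (by simp) (by simp)).mpr (by simp)
    simpa using this

lemma of_contains_4213 {l : List ℕ} (h : Contains l [4, 2, 1, 3]) :
    ∃ a b c d : ℕ, ([d, b, a, c]).Sublist l ∧ a < b ∧ b < c ∧ c < d := by
  obtain ⟨τ, hsub, hlen, hiso⟩ := h
  simp only [List.length_cons, List.length_nil] at hlen
  match τ, hlen with
  | [d, b, a, c], _ =>
    refine ⟨a, b, c, d, hsub, ?_, ?_, ?_⟩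
    · have := (hiso 2 1 (by simp) (by simp)).mpr (by simp)
      simpa using this
    · have := (hiso 1 3 (by simp) (by simp)).mpr (by simp)
      simpa using this
    · have := (hiso 3 0 (by simp) (by simp)).mpr (by simp)
      simpa using this

lemma sublist_split {a : ℕ} {l r : List ℕ} (h : (a :: l).Sublist r) :
    ∃ u v, r = u ++ a :: v ∧ l.Sublist v := by
  rw [List.cons_sublist_iff] at h
  obtain ⟨r₁, r₂, rfl, ha, hl⟩ := h
  obtain ⟨u, u', rfl⟩ := List.append_of_mem ha
  exact ⟨u, u' ++ r₂, by simp, List.sublist_append_of_sublist_right hl⟩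

lemma pair_sublist {a b : ℕ} : ∀ {l : List ℕ}, a ∈ l → b ∈ l → a ≠ b →
    ([a, b]).Sublist l ∨ ([b, a]).Sublist l := by
  intro l
  induction l with
  | nil => simp
  | cons x l ih =>
    intro ha hb hab
    rcases List.mem_cons.mp ha with rfl | ha'
    · have hb' : b ∈ l := by
        rcases List.mem_cons.mp hb with rfl | hb'
        · exact absurd rfl hab
        · exact hb'
      exact Or.inl ((List.singleton_sublist.mpr hb').cons₂ a)
    · rcases List.mem_cons.mp hb with rfl | hb'
      · exact Or.inr ((List.singleton_sublist.mpr ha').cons₂ b)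
      · rcases ih ha' hb' hab with h | h
        · exact Or.inl (h.cons x)
        · exact Or.inr (h.cons x)

lemma lt_of_append_eq_range' {l1 l2 : List ℕ} {a c n : ℕ}
    (h : l1 ++ l2 = List.range' 1 n) (ha : a ∈ l1) (hc : c ∈ l2) : a < c := by
  have hp : List.Pairwise (· < ·) (l1 ++ l2) := by
    rw [h]; exact List.pairwise_lt_range' (s := 1) (n := n)
  exact (List.pairwise_append.mp hp).2.2 a ha c hc

/-! ### Necessity -/

lemma nec_231 {n : ℕ} {l : List ℕ} (h : Contains l [2, 3, 1]) :
    psb l ≠ List.range' 1 n := by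
  obtain ⟨a, b, c, hsub, hca, hab⟩ := of_contains_231 h
  obtain ⟨u, v₁, rfl, hbc⟩ := sublist_split hsub
  obtain ⟨v, w, rfl, hc⟩ := sublist_split hbc
  have hcw : c ∈ w := List.singleton_sublist.mp hc
  intro hsort
  have hshape : u ++ a :: (v ++ b :: w) = u ++ ((a :: (v ++ [b])) ++ w) := by simp
  rw [hshape] at hsort
  have hrun := runPSB_append u ((a :: (v ++ [b])) ++ w) []
  set r1 := runPSB u [] with hr1
  have hrun2 := runPSB_append (a :: (v ++ [b])) w r1.2
  set r2 := runPSB (a :: (v ++ [b])) r1.2 with hr2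
  set r3 := runPSB w r2.2 with hr3
  have hout : psb (u ++ ((a :: (v ++ [b])) ++ w)) =
      (r1.1 ++ r2.1) ++ (r3.1 ++ r3.2) := by
    rw [psb, psbAux_eq_runPSB, hrun, hrun2]
    simp
  have hvalid : ValidStack r1.2 := runPSB_valid u [] validStack_nil
  have haout : a ∈ r1.1 ++ r2.1 :=
    List.mem_append_right _ (head_mem_out hab v r1.2 hvalid)
  have hcout : c ∈ r3.1 ++ r3.2 := by
    exact (runPSB_perm w r2.2).symm.subset (List.mem_append_left _ hcw)
  rw [hout] at hsort
  have := lt_of_append_eq_range' hsort haout hcout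
  omega

lemma nec_4213 {n : ℕ} {l : List ℕ} (hnd : l.Nodup) (h : Contains l [4, 2, 1, 3]) :
    psb l ≠ List.range' 1 n := by
  obtain ⟨a, b, c, d, hsub, hab, hbc, hcd⟩ := of_contains_4213 h
  obtain ⟨u, v₁, rfl, h1⟩ := sublist_split hsub
  obtain ⟨v, w, rfl, h2⟩ := sublist_split h1
  have haw : a ∈ w := h2.subset (by simp)
  have hcw : c ∈ w := h2.subset (by simp)
  intro hsort
  have hshape : u ++ d :: (v ++ b :: w) = (u ++ d :: v) ++ (b :: w) := by simp
  rw [hshape] at hsort hnd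
  set p := u ++ d :: v with hp
  have hdp : d ∈ p := by simp [hp]
  have hrun := runPSB_append p (b :: w) []
  set r1 := runPSB p [] with hr1
  have hout : psb (p ++ (b :: w)) =
      r1.1 ++ ((runPSB (b :: w) r1.2).1 ++ (runPSB (b :: w) r1.2).2) := by
    rw [psb, psbAux_eq_runPSB, hrun]
    simp
  have hd : d ∈ r1.1 ++ r1.2 := by
    have := runPSB_perm p []
    exact this.symm.subset (by simpa using hdp)
  rcases List.mem_append.mp hd with hd1 | hd2
  · -- d already in the output: b < d comes later, contradiction
    have hbmem : b ∈ (runPSB (b :: w) r1.2).1 ++ (runPSB (b :: w) r1.2).2 := by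
      have := runPSB_perm (b :: w) r1.2
      exact this.symm.subset (by simp)
    rw [hout] at hsort
    have := lt_of_append_eq_range' hsort hd1 hbmem
    omega
  · -- d in the stack: b bypasses, then a < b comes later, contradiction
    have hvalid : ValidStack r1.2 := runPSB_valid p [] validStack_nil
    obtain ⟨t, hst⟩ := hvalid
    have hsubp : ∀ y ∈ r1.2, y ∈ p := by
      intro y hy
      have := runPSB_perm p []
      exact (by simpa using this.subset (List.mem_append_right _ hy) : y ∈ p)
    have hdisj : (p).Disjoint (b :: w) := (List.nodup_append'.mp hnd).2.2
    have hbn : b ∉ r1.2 := fun hb => hdisj (hsubp b hb) (by simp)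
    have hcn : c ∉ r1.2 := fun hc => hdisj (hsubp c hc) (by simp [hcw])
    have hdr : t ≤ d ∧ d < t + r1.2.length := by
      rw [hst] at hd2; exact List.mem_range'_1.mp hd2
    have hbt : b < t := by
      by_contra hb
      push_neg at hb
      exact hbn (by rw [hst]; exact List.mem_range'_1.mpr ⟨hb, by omega⟩)
    have hbt1 : b + 1 < t := by
      rcases Nat.lt_or_ge (b+1) t with h | h
      · exact h
      · have : t ≤ c := by omega
        exact absurd (by rw [hst]; exact List.mem_range'_1.mpr ⟨this, by omega⟩) hcn
    have hL : r1.2.length ≠ 0 := by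
      intro h0
      rw [h0] at hst
      simp [hst] at hd2
    obtain ⟨L, hL'⟩ : ∃ L, r1.2.length = L + 1 := ⟨r1.2.length - 1, by omega⟩
    have hst' : r1.2 = t :: List.range' (t + 1) L := by
      rw [hst, hL', List.range'_succ]
    have hrb : runPSB (b :: w) r1.2 =
        (b :: (runPSB w r1.2).1, (runPSB w r1.2).2) := by
      rw [hst']
      simp only [runPSB, if_neg (by omega : ¬ (b + 1 = t)), if_pos (by omega : b + 1 < t)]
    rw [hrb] at hout
    have hout' : psb (p ++ (b :: w)) =
        (r1.1 ++ [b]) ++ ((runPSB w r1.2).1 ++ (runPSB w r1.2).2) := by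
      rw [hout]; simp
    have hamem : a ∈ (runPSB w r1.2).1 ++ (runPSB w r1.2).2 := by
      have := runPSB_perm w r1.2
      exact this.symm.subset (List.mem_append_left _ haw)
    rw [hout'] at hsort
    have := lt_of_append_eq_range' hsort
      (List.mem_append_right _ (List.mem_singleton_self b)) hamem
    omega

/-! ### Sufficiency -/

lemma suff (π0 : List ℕ) (hnd : π0.Nodup) (hav1 : Avoids π0 [2, 3, 1])
    (hav2 : Avoids π0 [4, 2, 1, 3]) :
    ∀ (xs ys : List ℕ) (t k m M : ℕ), π0 = ys ++ xs →
    (∀ a ∈ List.range' t k, a ∈ ys) →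
    (xs ++ List.range' t k).Perm (List.range' m M) →
    psbAux xs (List.range' t k) = List.range' m M := by
  intro xs
  induction xs with
  | nil =>
    intro ys t k m M hpi hsub hperm
    simp only [List.nil_append] at hperm
    have hk : k = M := by simpa using hperm.length_eq
    subst hk
    cases k with
    | zero => simp [psbAux]
    | succ k =>
      have htm : t = m := by
        have h1 : t ∈ List.range' m (k+1) := hperm.subset (by simp)
        have h2 : m ∈ List.range' t (k+1) := hperm.symm.subset (by simp)
        have := List.mem_range'_1.mp h1
        have := List.mem_range'_1.mp h2
        omega
      subst htm
      simp [psbAux]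
  | cons x xs ih =>
    intro ys t k m M hpi hsub hperm
    cases k with
    | zero =>
      -- empty stack: push x
      have : psbAux (x :: xs) (List.range' t 0) = psbAux xs (List.range' x 1) := by
        simp [psbAux, List.range']
      rw [this]
      apply ih (ys ++ [x]) x 1 m M (by simp [hpi]) (by simp)
      refine (List.Perm.trans ?_ (by simpa using hperm))
      have : List.range' x 1 = [x] := by simp [List.range']
      rw [this]
      exact List.perm_append_singleton x xs |>.trans (by simp)
    | succ k =>
      have hx_mem : x ∈ List.range' m M := hperm.subset (by simp)
      have hxm := List.mem_range'_1.mp hx_mem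
      have ht_mem : t ∈ List.range' m M := hperm.subset (by simp)
      have htm := List.mem_range'_1.mp ht_mem
      have hrange : List.range' t (k+1) = t :: List.range' (t+1) k := List.range'_succ (s := t) (n := k) (step := 1)
      have hxny : x ∉ ys := by
        rw [hpi] at hnd
        exact fun hx => (List.nodup_append'.mp hnd).2.2 hx (by simp)
      have hxnR : x ∉ List.range' t (k+1) := fun hx => hxny (hsub x hx)
      by_cases h1 : x + 1 = t
      · -- push
        have hstep : psbAux (x :: xs) (List.range' t (k+1)) = psbAux xs (List.range' x (k+2)) := by
          rw [hrange]
          simp only [psbAux, if_pos h1]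
          congr 1
          rw [List.range'_succ, List.range'_succ]
          simp [h1]
        rw [hstep]
        apply ih (ys ++ [x]) x (k+2) m M (by simp [hpi])
        · intro a ha
          rw [List.mem_range'_1] at ha
          rcases Nat.eq_or_lt_of_le ha.1 with h | h
          · simp [← h]
          · have : a ∈ List.range' t (k+1) := List.mem_range'_1.mpr (by omega)
            exact List.mem_append_left _ (hsub a this)
        · have hsplit : List.range' x (k+2) = x :: List.range' t (k+1) := by
            rw [List.range'_succ, h1]
          rw [hsplit]
          exact List.perm_middle.trans (by simpa using hperm)
      · by_cases h2 : x + 1 < t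
        · -- bypass
          have hxeqm : x = m := by
            by_contra hxm'
            have hmlt : m < x := by omega
            have hM : 0 < M := by omega
            have hm_mem : m ∈ (x :: xs) ++ List.range' t (k+1) :=
              hperm.symm.subset (List.mem_range'_1.mpr ⟨le_refl m, by omega⟩)
            have hmxs : m ∈ xs := by
              rcases List.mem_append.mp hm_mem with h | h
              · rcases List.mem_cons.mp h with h | h
                · omega
                · exact h
              · have := List.mem_range'_1.mp h; omega
            have hw_mem : x + 1 ∈ (x :: xs) ++ List.range' t (k+1) :=
              hperm.symm.subset (List.mem_range'_1.mpr ⟨by omega, by omega⟩)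
            have hwxs : x + 1 ∈ xs := by
              rcases List.mem_append.mp hw_mem with h | h
              · rcases List.mem_cons.mp h with h | h
                · omega
                · exact h
              · have := List.mem_range'_1.mp h; omega
            have htys : t ∈ ys := hsub t (by simp [hrange])
            rcases pair_sublist hmxs hwxs (by omega) with hpat | hpat
            · -- [m, x+1] in xs : pattern 4213 = [t, x, m, x+1]
              apply hav2
              apply contains_4213 (a := m) (b := x) (c := x + 1) (d := t) _
                hmlt (by omega) h2
              rw [hpi]
              have hfst : ([t]).Sublist ys := List.singleton_sublist.mpr htys
              have hsnd : ([x, m, x + 1]).Sublist (x :: xs) := hpat.cons₂ x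
              exact hfst.append hsnd
            · -- [x+1, m] in xs : pattern 231 = [x, x+1, m]
              apply hav1
              apply contains_231 (a := x) (b := x + 1) (c := m) _ hmlt (by omega)
              rw [hpi]
              exact List.sublist_append_of_sublist_right (hpat.cons₂ x)
          subst hxeqm
          obtain ⟨M', rfl⟩ : ∃ M', M = M' + 1 := ⟨M - 1, by omega⟩
          have hstep : psbAux (x :: xs) (List.range' t (k+1)) =
              x :: psbAux xs (List.range' t (k+1)) := by
            rw [hrange]
            simp only [psbAux, if_neg h1, if_pos h2]
          rw [hstep]
          have hrec := ih (ys ++ [x]) t (k+1) (x+1) M' (by simp [hpi])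
            (fun a ha => List.mem_append_left _ (hsub a ha)) ?_
          · rw [hrec, List.range'_succ]
          · have hr : List.range' x (M' + 1) = x :: List.range' (x+1) M' := List.range'_succ (s := x) (n := M') (step := 1)
            rw [hr] at hperm
            have hperm2 : (x :: (xs ++ List.range' t (k+1))).Perm
                (x :: List.range' (x+1) M') := by simpa using hperm
            exact hperm2.cons_inv
        · -- pop
          have hxbig : t + (k + 1) ≤ x := by
            rcases Nat.lt_or_ge x (t + (k+1)) with h | h
            · exact absurd (List.mem_range'_1.mpr ⟨by omega, h⟩) hxnR
            · exact h
          have htm' : t = m := by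
            by_contra htm''
            have hmlt : m < t := by omega
            have hm_mem : m ∈ (x :: xs) ++ List.range' t (k+1) :=
              hperm.symm.subset (List.mem_range'_1.mpr ⟨le_refl m, by omega⟩)
            have hmxs : m ∈ xs := by
              rcases List.mem_append.mp hm_mem with h | h
              · rcases List.mem_cons.mp h with h | h
                · omega
                · exact h
              · have := List.mem_range'_1.mp h; omega
            have htys : t ∈ ys := hsub t (by simp [hrange])
            apply hav1
            apply contains_231 (a := t) (b := x) (c := m) _ hmlt (by omega)
            rw [hpi]
            have hfst : ([t]).Sublist ys := List.singleton_sublist.mpr htys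
            have hsnd : ([x, m]).Sublist (x :: xs) :=
              (List.singleton_sublist.mpr hmxs).cons₂ x
            exact hfst.append hsnd
          subst htm'
          have hMk : k + 1 ≤ M := by
            have := hperm.length_eq
            simp at this
            omega
          obtain ⟨M', rfl⟩ : ∃ M', M = M' + (k + 1) := ⟨M - (k+1), by omega⟩
          have hstep : psbAux (x :: xs) (List.range' t (k+1)) =
              List.range' t (k+1) ++ psbAux xs [x] := by
            rw [hrange]
            simp only [psbAux, if_neg h1, if_neg h2]
          rw [hstep]
          have hsplitr : List.range' t (k+1) ++ List.range' (t + (k+1)) M' =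
              List.range' t (M' + (k+1)) := by
            have := List.range'_append (s := t) (m := k+1) (n := M') (step := 1)
            rw [Nat.add_comm M' (k+1)]
            simpa using this
          have hrec := ih (ys ++ [x]) x 1 (t + (k+1)) M' (by simp [hpi]) (by simp) ?_
          · have hxl : List.range' x 1 = [x] := rfl
            rw [hxl] at hrec
            rw [hrec, ← hsplitr]
          · have hxl : List.range' x 1 = [x] := rfl
            rw [hxl]
            have e1 : (xs ++ [x]) ++ List.range' t (k+1)
                = xs ++ x :: List.range' t (k+1) := by simp
            have hperm2 : ((xs ++ [x]) ++ List.range' t (k+1)).Perm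
                (List.range' (t + (k+1)) M' ++ List.range' t (k+1)) := by
              rw [e1]
              refine (List.perm_middle.trans ?_)
              refine (hperm.trans ?_)
              rw [← hsplitr]
              exact List.perm_append_comm
            exact (List.perm_append_right_iff _).mp hperm2

theorem psb_sorts_iff (n : ℕ) (π : List ℕ) (hπ : IsPermList n π) :
    psb π = List.range' 1 n ↔ Avoids π [2, 3, 1] ∧ Avoids π [4, 2, 1, 3] := by
  have hnd : π.Nodup := hπ.nodup_iff.mpr (List.nodup_range' (s := 1) (n := n))
  constructor
  · intro h
    constructor
    · intro hc
      exact nec_231 hc h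
    · intro hc
      exact nec_4213 hnd hc h
  · rintro ⟨h1, h2⟩
    have := suff π hnd h1 h2 π [] 0 0 1 n rfl (by simp) (by simpa [IsPermList] using hπ)
    simpa [psb] using this
end
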